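/- arXiv:2002.02064 — 4 statements merged into one kernel-verified Lean document; each statement's English description precedes it below -/
import Mathlib

section
/- For every T ≥ 1 and every sequence of (measurable) prediction functions f_t : ℝ^t × ℝ^{t−1} → ℝ (t = 1, …, T), there is a joint distribution over a ∈ [−1,1] and sequences x_t, y_t ∈ ℝ with y_t = a·x_t and |x_t| ≤ t for all t, such that the online predictions ŷ_t = f_t(x_1,…,x_t, y_1,…,y_{t−1}) incur expected regret E[ Σ_{t=1}^T (ŷ_t − y_t)² − Σ_{t=1}^T (a·x_t − y_t)² ] ≥ T². Concretely, one may take a uniform on {−1, +1}, x_t = 0 for t < T, x_T = T, and y_t = a·x_t. -/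
open scoped BigOperators
open Finset MeasureTheory

/-- **impossibility of sublinear regret without the LDS structure.**
For any `T ≥ 1` and any online prediction rule `f_t : ℝ^t × ℝ^{t−1} → ℝ` (predicting `y_t` from
`x_1,…,x_t` and `y_1,…,y_{t−1}`), there is a joint distribution over `a ∈ [−1,1]` and sequences
with `y_t = a·x_t` and `|x_t| ≤ t` forcing expected regret at least `T²`; one may take `a`
uniform on `{−1,+1}`, `x_t = 0` for `t < T` and `x_T = T`. -/
theorem no_sublinear_regret_without_lds
    (T : ℕ) (hT : 1 ≤ T)
    (f : (t : ℕ) → (Fin t → ℝ) → (Fin (t - 1) → ℝ) → ℝ)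
    (hf : ∀ t, Measurable (Function.uncurry (f t))) :
    ∃ (Ω : Type) (_ : MeasurableSpace Ω) (P : Measure Ω),
      IsProbabilityMeasure P ∧
      ∃ (a : Ω → ℝ) (x y : ℕ → Ω → ℝ),
        (∀ ω, a ω ∈ Set.Icc (-1 : ℝ) 1) ∧
        (∀ ω, a ω = 1 ∨ a ω = -1) ∧
        P {ω | a ω = 1} = 1 / 2 ∧
        (∀ ω t, y t ω = a ω * x t ω) ∧
        (∀ ω t, 1 ≤ t → t ≤ T → |x t ω| ≤ (t : ℝ)) ∧
        (∀ ω t, 1 ≤ t → t < T → x t ω = 0) ∧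
        (∀ ω, x T ω = (T : ℝ)) ∧
        (T : ℝ) ^ 2 ≤
          ∫ ω,
            ((∑ t ∈ Finset.Icc 1 T,
                (f t (fun i => x ((i : ℕ) + 1) ω) (fun i => y ((i : ℕ) + 1) ω) - y t ω) ^ 2) -
              ∑ t ∈ Finset.Icc 1 T, (a ω * x t ω - y t ω) ^ 2) ∂P := by
  classical
  set μ : Measure Bool :=
    (1/2 : ENNReal) • Measure.dirac true + (1/2 : ENNReal) • Measure.dirac false with hμ
  have hprob : IsProbabilityMeasure μ := by
    constructor
    simp [hμ]
    rw [ENNReal.inv_two_add_inv_two]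
  set A : Bool → ℝ := fun ω => if ω then 1 else -1 with hA
  set X : ℕ → Bool → ℝ := fun t _ => if t = T then (T : ℝ) else 0 with hX
  set Y : ℕ → Bool → ℝ := fun t ω => A ω * X t ω with hY
  refine ⟨Bool, inferInstance, μ, hprob, A, X, Y, ?_, ?_, ?_, ?_, ?_, ?_, ?_, ?_⟩
  · intro ω; cases ω <;> simp [hA] <;> norm_num
  · intro ω; cases ω <;> simp [hA]
  · have hset : {ω : Bool | A ω = 1} = {true} := by
      ext ω; cases ω <;> simp [hA] <;> norm_num
    rw [hset]
    simp [hμ, Measure.dirac_apply]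
  · intro ω t; rfl
  · intro ω t h1 h2
    by_cases h : t = T <;> simp [hX, h]
  · intro ω t h1 h2
    simp [hX, Nat.ne_of_lt h2]
  · intro ω; simp [hX]
  · -- the main integral bound
    set g : Bool → ℝ := fun ω =>
      ((∑ t ∈ Finset.Icc 1 T,
          (f t (fun i => X ((i : ℕ) + 1) ω) (fun i => Y ((i : ℕ) + 1) ω) - Y t ω) ^ 2) -
        ∑ t ∈ Finset.Icc 1 T, (A ω * X t ω - Y t ω) ^ 2) with hg
    show (T : ℝ) ^ 2 ≤ ∫ ω, g ω ∂μ
    have h1 : Integrable g (Measure.dirac true) := .of_finite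
    have h2 : Integrable g (Measure.dirac false) := .of_finite
    have hI : ∫ ω, g ω ∂μ = (1/2 : ℝ) * g true + (1/2 : ℝ) * g false := by
      rw [hμ, integral_add_measure (h1.smul_measure (by norm_num))
        (h2.smul_measure (by norm_num)), integral_smul_measure, integral_smul_measure,
        integral_dirac, integral_dirac]
      norm_num
    rw [hI]
    set c : ℕ → ℝ := fun t =>
      f t (fun i => if ((i : ℕ) + 1 = T) then (T : ℝ) else 0) (fun _ => 0) with hc
    have hgω : ∀ ω, g ω = ∑ t ∈ Finset.Icc 1 T, (c t - A ω * X t ω) ^ 2 := by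
      intro ω
      have h0 : ∑ t ∈ Finset.Icc 1 T, (A ω * X t ω - Y t ω) ^ 2 = 0 := by
        simp [hY]
      simp only [hg]
      rw [h0, sub_zero]
      refine Finset.sum_congr rfl fun t ht => ?_
      rw [Finset.mem_Icc] at ht
      have harg1 : (fun i : Fin t => X ((i : ℕ) + 1) ω)
          = fun i : Fin t => if ((i : ℕ) + 1 = T) then (T : ℝ) else 0 := rfl
      have harg2 : (fun i : Fin (t - 1) => Y ((i : ℕ) + 1) ω)
          = fun _ : Fin (t - 1) => (0 : ℝ) := by
        funext i
        have hi : (i : ℕ) + 1 ≠ T := by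
          have := i.isLt
          omega
        simp [hY, hX, hi]
      rw [harg1, harg2, hY, hc]
    have hAt : A true = 1 := rfl
    have hAf : A false = -1 := rfl
    rw [hgω true, hgω false, Finset.mul_sum, Finset.mul_sum, ← Finset.sum_add_distrib]
    have hsum : ∀ t ∈ Finset.Icc 1 T,
        1/2 * (c t - A true * X t true) ^ 2 + 1/2 * (c t - A false * X t false) ^ 2
          = (c t) ^ 2 + (X t true) ^ 2 := by
      intro t ht
      have hx : X t false = X t true := rfl
      rw [hAt, hAf, hx]
      ring
    rw [Finset.sum_congr rfl hsum]
    have hT2 : ((T : ℝ)) ^ 2 ≤ (c T) ^ 2 + (X T true) ^ 2 := by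
      have : X T true = (T : ℝ) := by simp [hX]
      rw [this]
      nlinarith [sq_nonneg (c T)]
    refine le_trans hT2 (Finset.single_le_sum (f := fun t => c t ^ 2 + X t true ^ 2) (fun t _ => add_nonneg (sq_nonneg _) (sq_nonneg _)) ?_)
    simp [hT]
end

section
/- There is an absolute constant K ≥ 1 such that the following holds. Let c, c₁, c₂ > 0 with c₁ ≤ 1/2 and c ≥ 1/c₁, let 0 < α ≤ 1, μ > 0, C_ξ ≥ 0, a > 0, and t ≥ 1. Let x_0, …, x_t be real numbers such that the sequence is (c, c₁, c₂, α)-anomaly-free (in dimension one), and let ξ_0, …, ξ_{t−1} be reals with |ξ_s| ≤ C_ξ for all s. Then Σ_{s=0}^{t−1} | ξ_s · x_s · (μ + Σ_{r=0}^{t−1} x_r²)⁻¹ · x_t | + a·| μ·(μ + Σ_{s=0}^{t−1} x_s²)⁻¹ · x_t | ≤ K · max{ C_ξ·c²·t/μ + a·c , C_ξ/c₂² + c₁^{−1/(α+2)}·c₂^{−2/(α+2)}·( a·μ^{1/(α+2)} + C_ξ·t^{1/2}·μ^{−α/(2(α+2))} ) }. -/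
open scoped BigOperators Classical
open Finset

/-- A one-dimensional sequence is `(c, c₁, c₂, α)`-anomaly-free (up to index `N`) if whenever
`|x_t| = M > c` there are at least `c₁ M^α` indices `s < t` with `|x_s| ≥ c₂ M`. -/
def AnomalyFree1 (x : ℕ → ℝ) (N : ℕ) (c c₁ c₂ α : ℝ) : Prop :=
  ∀ t < N, c < |x t| →
    c₁ * |x t| ^ α ≤
      (((Finset.range t).filter fun s => c₂ * |x t| ≤ |x s|).card : ℝ)

/-!
Write `S = μ + ∑_{r<t} x_r²`; both terms of the left-hand side are at most a weight times
`|x_t| / S`. Let `M = max_{s ≤ t} |x_s|`. If `M ≤ c`, then `S ≥ μ` gives the first branch of the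
maximum. Otherwise anomaly-freeness at a maximiser yields at least `c₁ M^α` earlier indices with
`|x_s| ≥ c₂ M`, hence `S ≥ c₁ c₂² M^(α+2)`. Interpolating between `S ≥ μ` and this bound by the
weighted AM–GM inequality, and using `∑ |x_s| ≤ √(t S)` (Cauchy–Schwarz), gives the second branch.
-/

section Interpolation

variable {μ S κ M p q : ℝ}

theorem rpow_mul_rpow_mul_rpow_le (hμ : 0 ≤ μ) (hκ : 0 ≤ κ) (hM : 0 ≤ M) (hq : 0 ≤ q)
    (hqp : q ≤ p) (hμS : μ ≤ S) (hMS : κ * M ^ p ≤ S) :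
    μ ^ (1 - q / p) * κ ^ (q / p) * M ^ q ≤ S := by
  have hp : 0 ≤ p := hq.trans hqp
  have hθ : 0 ≤ q / p := div_nonneg hq hp
  have hθ' : 0 ≤ 1 - q / p := sub_nonneg.2 (div_le_one_of_le₀ hqp hp)
  have hpow : (κ * M ^ p) ^ (q / p) = κ ^ (q / p) * M ^ q := by
    rw [Real.mul_rpow hκ (Real.rpow_nonneg hM _), ← Real.rpow_mul hM]
    rcases hp.eq_or_lt with rfl | hp
    · rw [le_antisymm hqp hq]; simp
    · rw [mul_div_cancel₀ _ hp.ne']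
  calc μ ^ (1 - q / p) * κ ^ (q / p) * M ^ q = μ ^ (1 - q / p) * (κ * M ^ p) ^ (q / p) := by
        rw [hpow, mul_assoc]
    _ ≤ (1 - q / p) * μ + q / p * (κ * M ^ p) :=
      Real.geom_mean_le_arith_mean2_weighted hθ' hθ hμ (by positivity) (by ring)
    _ ≤ (1 - q / p) * S + q / p * S := by gcongr
    _ = S := by ring

theorem mul_le_rpow_mul_of_mul_rpow_le (hμ : 0 < μ) (hκ : 0 < κ) (hM : 0 ≤ M) (hp : 1 ≤ p)
    (hμS : μ ≤ S) (hMS : κ * M ^ p ≤ S) :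
    μ * M ≤ κ ^ (-1 / p) * μ ^ (1 / p) * S := by
  have h := rpow_mul_rpow_mul_rpow_le hμ.le hκ.le hM zero_le_one hp hμS hMS
  rw [Real.rpow_one] at h
  have hμ' : μ ^ (1 / p) * μ ^ (1 - 1 / p) = μ := by
    rw [← Real.rpow_add hμ, add_sub_cancel, Real.rpow_one]
  have hκ' : κ ^ (-1 / p) * κ ^ (1 / p) = 1 := by
    rw [← Real.rpow_add hκ, neg_div, neg_add_cancel, Real.rpow_zero]
  calc μ * M = κ ^ (-1 / p) * μ ^ (1 / p) * (μ ^ (1 - 1 / p) * κ ^ (1 / p) * M) := by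
        linear_combination (-(κ ^ (-1 / p) * κ ^ (1 / p) * M)) * hμ' - μ * M * hκ'
    _ ≤ κ ^ (-1 / p) * μ ^ (1 / p) * S := by gcongr

theorem le_rpow_mul_sqrt_of_mul_rpow_le (hμ : 0 < μ) (hκ : 0 < κ) (hM : 0 ≤ M) (hp : 2 ≤ p)
    (hμS : μ ≤ S) (hMS : κ * M ^ p ≤ S) :
    M ≤ κ ^ (-1 / p) * μ ^ (-(1 / 2 - 1 / p)) * √S := by
  have h := rpow_mul_rpow_mul_rpow_le hμ.le hκ.le hM zero_le_two hp hμS hMS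
  have hsq : (μ ^ (1 / 2 - 1 / p) * κ ^ (1 / p) * M) ^ 2 =
      μ ^ (1 - 2 / p) * κ ^ (2 / p) * M ^ (2 : ℝ) := by
    rw [mul_pow, mul_pow, ← Real.rpow_mul_natCast hμ.le, ← Real.rpow_mul_natCast hκ.le,
      Real.rpow_two]
    congr 3 <;> push_cast <;> ring
  have hL : μ ^ (1 / 2 - 1 / p) * κ ^ (1 / p) * M ≤ √S := Real.le_sqrt_of_sq_le (hsq ▸ h)
  have hμ' : μ ^ (-(1 / 2 - 1 / p)) * μ ^ (1 / 2 - 1 / p) = 1 := by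
    rw [← Real.rpow_add hμ, neg_add_cancel, Real.rpow_zero]
  have hκ' : κ ^ (-1 / p) * κ ^ (1 / p) = 1 := by
    rw [← Real.rpow_add hκ, neg_div, neg_add_cancel, Real.rpow_zero]
  calc M = κ ^ (-1 / p) * μ ^ (-(1 / 2 - 1 / p)) * (μ ^ (1 / 2 - 1 / p) * κ ^ (1 / p) * M) := by
        linear_combination (-(κ ^ (-1 / p) * κ ^ (1 / p) * M)) * hμ' - M * hκ'
    _ ≤ κ ^ (-1 / p) * μ ^ (-(1 / 2 - 1 / p)) * √S := by gcongr

end Interpolation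

theorem sum_abs_le_sqrt_card_mul_sqrt_sum_sq {ι : Type*} (s : Finset ι) (f : ι → ℝ) :
    ∑ i ∈ s, |f i| ≤ √(#s : ℝ) * √(∑ i ∈ s, f i ^ 2) := by
  rw [← Real.sqrt_mul (Nat.cast_nonneg _)]
  refine (le_abs_self _).trans (Real.abs_le_sqrt ?_)
  simpa only [sq_abs] using sq_sum_le_card_mul_sum_sq (s := s) (f := fun i => |f i|)

theorem mul_sq_rpow_neg_one_div {a b : ℝ} (ha : 0 ≤ a) (hb : 0 ≤ b) (p : ℝ) :
    (a * b ^ 2) ^ (-1 / p) = a ^ (-1 / p) * b ^ (-2 / p) := by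
  rw [Real.mul_rpow ha (by positivity), ← Real.rpow_natCast, ← Real.rpow_mul hb]
  congr 2
  push_cast
  ring

theorem sum_abs_mul_mul_inv_mul_le {ξ x : ℕ → ℝ} {C S : ℝ} {t : ℕ} (hS : 0 ≤ S)
    (hξ : ∀ s < t, |ξ s| ≤ C) :
    ∑ s ∈ range t, |ξ s * x s * S⁻¹ * x t| ≤ C * ((∑ s ∈ range t, |x s|) * |x t| / S) := by
  rw [sum_mul, sum_div, mul_sum]
  refine sum_le_sum fun s hs => ?_
  rw [abs_mul, abs_mul, abs_mul, abs_inv, abs_of_nonneg hS, mul_assoc, mul_assoc,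
    ← div_eq_inv_mul, ← mul_div_assoc]
  gcongr
  exact hξ s (mem_range.1 hs)

namespace AnomalyFree1

variable {x : ℕ → ℝ} {N t : ℕ} {c c₁ c₂ α μ : ℝ}

theorem mul_rpow_le_sum_sq (hx : AnomalyFree1 x N c c₁ c₂ α) (hc : 0 ≤ c) (hc₂ : 0 ≤ c₂)
    {u : ℕ} (huN : u < N) (hut : u ≤ t) (hxu : c < |x u|) :
    c₁ * c₂ ^ 2 * |x u| ^ (α + 2) ≤ ∑ r ∈ range t, x r ^ 2 := by
  set F := (range u).filter fun s => c₂ * |x u| ≤ |x s|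
  calc c₁ * c₂ ^ 2 * |x u| ^ (α + 2) = c₁ * |x u| ^ α * (c₂ * |x u|) ^ 2 := by
        rw [Real.rpow_add (hc.trans_lt hxu), Real.rpow_two]; ring
    _ ≤ #F * (c₂ * |x u|) ^ 2 := by gcongr; exact hx u huN hxu
    _ = ∑ _r ∈ F, (c₂ * |x u|) ^ 2 := by rw [sum_const, nsmul_eq_mul]
    _ ≤ ∑ r ∈ F, x r ^ 2 := sum_le_sum fun r hr => by
        rw [← sq_abs (x r)]; exact pow_le_pow_left₀ (by positivity) (mem_filter.1 hr).2 2
    _ ≤ ∑ r ∈ range t, x r ^ 2 :=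
        sum_le_sum_of_subset_of_nonneg ((filter_subset _ _).trans (range_subset_range.2 hut))
          fun _ _ _ => sq_nonneg _

theorem mul_abs_div_le (hx : AnomalyFree1 x (t + 1) c c₁ c₂ α) (hc : 0 ≤ c) (hc₁ : 0 < c₁)
    (hc₂ : 0 < c₂) (hα : -1 ≤ α) (hμ : 0 < μ) :
    μ * |x t| / (μ + ∑ r ∈ range t, x r ^ 2) ≤
      max c (c₁ ^ (-1 / (α + 2)) * c₂ ^ (-2 / (α + 2)) * μ ^ (1 / (α + 2))) := by
  have hμS : μ ≤ μ + ∑ r ∈ range t, x r ^ 2 :=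
    le_add_of_nonneg_right (sum_nonneg fun _ _ => sq_nonneg _)
  have hS := hμ.trans_le hμS
  rw [div_le_iff₀ hS]
  rcases le_or_gt (|x t|) c with hxt | hxt
  · have hsmall : μ * |x t| ≤ c * (μ + ∑ r ∈ range t, x r ^ 2) := by nlinarith
    exact hsmall.trans (mul_le_mul_of_nonneg_right (le_max_left _ _) hS.le)
  · have hD : c₁ * c₂ ^ 2 * |x t| ^ (α + 2) ≤ μ + ∑ r ∈ range t, x r ^ 2 :=
      le_add_of_nonneg_of_le hμ.le (hx.mul_rpow_le_sum_sq hc hc₂.le (lt_add_one t) le_rfl hxt)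
    have hlarge :=
      mul_le_rpow_mul_of_mul_rpow_le hμ (by positivity) (abs_nonneg _) (by linarith) hμS hD
    rw [mul_sq_rpow_neg_one_div hc₁.le hc₂.le] at hlarge
    exact hlarge.trans (mul_le_mul_of_nonneg_right (le_max_right _ _) hS.le)

theorem sum_abs_mul_abs_div_le (hx : AnomalyFree1 x (t + 1) c c₁ c₂ α) (hc : 0 ≤ c)
    (hc₁ : 0 < c₁) (hc₂ : 0 < c₂) (hα : 0 ≤ α) (hμ : 0 < μ) :
    (∑ s ∈ range t, |x s|) * |x t| / (μ + ∑ r ∈ range t, x r ^ 2) ≤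
      max (c ^ 2 * t / μ) (c₁ ^ (-1 / (α + 2)) * c₂ ^ (-2 / (α + 2)) *
        ((t : ℝ) ^ (1 / 2 : ℝ) * μ ^ (-(α / (2 * (α + 2)))))) := by
  set S := μ + ∑ r ∈ range t, x r ^ 2
  have hμS : μ ≤ S := le_add_of_nonneg_right (sum_nonneg fun _ _ => sq_nonneg _)
  have hS := hμ.trans_le hμS
  obtain ⟨u, hu, hmax⟩ :=
    exists_max_image (range (t + 1)) (fun s => |x s|) ⟨t, self_mem_range_succ t⟩
  have hut : u ≤ t := Nat.lt_succ_iff.1 (mem_range.1 hu)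
  have hxt : |x t| ≤ |x u| := hmax t (self_mem_range_succ t)
  rcases le_or_gt (|x u|) c with hxu | hxu
  · refine le_max_of_le_left ?_
    have hsum : ∑ s ∈ range t, |x s| ≤ t * c := by
      simpa using sum_le_sum fun s hs =>
        (hmax s (mem_range.2 (Nat.lt_succ_of_lt (mem_range.1 hs)))).trans hxu
    calc (∑ s ∈ range t, |x s|) * |x t| / S ≤ t * c * c / μ := by
          gcongr
          exact hxt.trans hxu
      _ = c ^ 2 * t / μ := by ring
  · refine le_max_of_le_right ?_
    have hD : c₁ * c₂ ^ 2 * |x u| ^ (α + 2) ≤ S :=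
      le_add_of_nonneg_of_le hμ.le
        (hx.mul_rpow_le_sum_sq hc hc₂.le (Nat.lt_succ_of_le hut) hut hxu)
    have hM :=
      le_rpow_mul_sqrt_of_mul_rpow_le hμ (by positivity) (abs_nonneg _) (by linarith) hμS hD
    have hCS : ∑ s ∈ range t, |x s| ≤ √t * √S := by
      simpa using (sum_abs_le_sqrt_card_mul_sqrt_sum_sq (range t) x).trans
        (mul_le_mul_of_nonneg_left (Real.sqrt_le_sqrt (le_add_of_nonneg_left hμ.le))
          (Real.sqrt_nonneg _))
    have hexp : 1 / 2 - 1 / (α + 2) = α / (2 * (α + 2)) := by field_simp; ring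
    rw [mul_sq_rpow_neg_one_div hc₁.le hc₂.le, hexp] at hM
    rw [← Real.sqrt_eq_rpow, div_le_iff₀ hS]
    calc (∑ s ∈ range t, |x s|) * |x t|
        ≤ (√t * √S) * (c₁ ^ (-1 / (α + 2)) * c₂ ^ (-2 / (α + 2)) *
            μ ^ (-(α / (2 * (α + 2)))) * √S) :=
          mul_le_mul hCS (hxt.trans hM) (abs_nonneg _) (by positivity)
      _ = _ := by
          linear_combination (c₁ ^ (-1 / (α + 2)) * c₂ ^ (-2 / (α + 2)) * √t *
            μ ^ (-(α / (2 * (α + 2))))) * Real.mul_self_sqrt hS.le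

end AnomalyFree1

/-- **one-dimensional prediction error bound.** -/
theorem one_dim_prediction_error_bound :
    ∃ K : ℝ, 1 ≤ K ∧
      ∀ (c c₁ c₂ α μ Cxi a : ℝ) (t : ℕ) (x ξ : ℕ → ℝ),
        0 < c → 0 < c₁ → 0 < c₂ → c₁ ≤ 1 / 2 → 1 / c₁ ≤ c →
        0 < α → α ≤ 1 → 0 < μ → 0 ≤ Cxi → 0 < a → 1 ≤ t →
        AnomalyFree1 x (t + 1) c c₁ c₂ α →
        (∀ s, s ≤ t - 1 → |ξ s| ≤ Cxi) →
        (∑ s ∈ Finset.range t,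
            |ξ s * x s * (μ + ∑ r ∈ Finset.range t, x r ^ 2)⁻¹ * x t|) +
          a * |μ * (μ + ∑ s ∈ Finset.range t, x s ^ 2)⁻¹ * x t| ≤
        K * max (Cxi * c ^ 2 * (t : ℝ) / μ + a * c)
          (Cxi / c₂ ^ 2 +
            c₁ ^ (-(1 : ℝ) / (α + 2)) * c₂ ^ (-(2 : ℝ) / (α + 2)) *
              (a * μ ^ ((1 : ℝ) / (α + 2)) +
                Cxi * (t : ℝ) ^ ((1 : ℝ) / 2) * μ ^ (-(α / (2 * (α + 2)))))) := by
  refine ⟨2, one_le_two, ?_⟩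
  intro c c₁ c₂ α μ Cxi a t x ξ hc hc₁ hc₂ _ _ hα _ hμ hCxi ha _ hx hξ
  set S := μ + ∑ r ∈ range t, x r ^ 2
  have hS : 0 < S := by positivity
  have hnoise := (sum_abs_mul_mul_inv_mul_le hS.le fun s hs => hξ s (Nat.le_sub_one_of_lt hs)).trans
    (mul_le_mul_of_nonneg_left (hx.sum_abs_mul_abs_div_le hc.le hc₁ hc₂ hα.le hμ) hCxi)
  have hbias := mul_le_mul_of_nonneg_left (hx.mul_abs_div_le hc.le hc₁ hc₂ (by linarith) hμ) ha.le
  have habs : a * |μ * S⁻¹ * x t| = a * (μ * |x t| / S) := by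
    rw [abs_mul, abs_mul, abs_inv, abs_of_pos hμ, abs_of_pos hS, div_eq_mul_inv]; ring
  have hAQ : 0 ≤ c₁ ^ (-1 / (α + 2)) * c₂ ^ (-2 / (α + 2)) * (a * μ ^ (1 / (α + 2))) := by
    positivity
  have hAR : 0 ≤ c₁ ^ (-1 / (α + 2)) * c₂ ^ (-2 / (α + 2)) *
      (Cxi * (t : ℝ) ^ (1 / 2 : ℝ) * μ ^ (-(α / (2 * (α + 2))))) := by positivity
  have hCc : 0 ≤ Cxi / c₂ ^ 2 := by positivity
  have hac : 0 ≤ a * c := by positivity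
  have hCt : 0 ≤ Cxi * c ^ 2 * (t : ℝ) / μ := by positivity
  rw [habs, two_mul]
  gcongr ?_ + ?_
  · refine hnoise.trans ?_
    rw [mul_max_of_nonneg _ _ hCxi, ← mul_div_assoc, ← mul_assoc]
    exact max_le_max (by linarith) (by linarith)
  · refine hbias.trans ?_
    rw [mul_max_of_nonneg _ _ ha.le]
    exact max_le_max (by linarith) (by linarith)
end

section
/- Let d ≥ 1, C_A ≥ 1, C_ξ > 0, C₀ ≥ 0. Suppose A ∈ ℝ^{d×d} is diagonalizable as A = V D V⁻¹ with V ∈ ℂ^{d×d} invertible, ‖V‖₂·‖V⁻¹‖₂ ≤ C_A, and D diagonal with all diagonal entries of modulus at most 1. Let x_0, …, x_t ∈ ℝ^d with ‖x_0‖ ≤ C₀ satisfy x_s = A x_{s−1} + ξ_s with ‖ξ_s‖ ≤ C_ξ for 1 ≤ s ≤ t. Then for any unit vector w ∈ ℝ^d, there exist at least min{ ⌊|wᵀx_t| / (d²·2^{d+1}·C_A·C_ξ)⌋ , ⌊t/d²⌋ } distinct indices s with 0 ≤ s ≤ t−1 such that |wᵀ x_s| ≥ |wᵀ x_t| / 2^{d+1}.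 -/
open scoped BigOperators Classical
open Finset

noncomputable def euclNorm {k : ℕ} (x : Fin k → ℝ) : ℝ := Real.sqrt (∑ i, x i ^ 2)

noncomputable def ceuclNorm {k : ℕ} (x : Fin k → ℂ) : ℝ := Real.sqrt (∑ i, ‖x i‖ ^ 2)

noncomputable def cSpec2Norm {n m : ℕ} (A : Matrix (Fin n) (Fin m) ℂ) : ℝ :=
  sSup ((fun x => ceuclNorm (A.mulVec x)) '' {x | ceuclNorm x ≤ 1})

section Aux

open Polynomial

lemma ceuclNorm_eq_norm {k : ℕ} (x : Fin k → ℂ) :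
    ceuclNorm x = ‖(WithLp.equiv 2 (Fin k → ℂ)).symm x‖ := by
  rw [EuclideanSpace.norm_eq]
  simp [ceuclNorm]

lemma ceuclNorm_nonneg {k : ℕ} (x : Fin k → ℂ) : 0 ≤ ceuclNorm x := Real.sqrt_nonneg _

lemma ceuclNorm_sum_le {k : ℕ} {ι : Type*} (s : Finset ι) (v : ι → (Fin k → ℂ)) :
    ceuclNorm (∑ j ∈ s, v j) ≤ ∑ j ∈ s, ceuclNorm (v j) := by
  simp only [ceuclNorm_eq_norm]
  rw [show (WithLp.equiv 2 (Fin k → ℂ)).symm (∑ j ∈ s, v j)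
      = ∑ j ∈ s, (WithLp.equiv 2 (Fin k → ℂ)).symm (v j) from by simp [WithLp.toLp_sum]]
  exact norm_sum_le _ _

lemma abs_entry_le_ceuclNorm {k : ℕ} (x : Fin k → ℂ) (i : Fin k) :
    ‖x i‖ ≤ ceuclNorm x := by
  rw [show ‖x i‖ = Real.sqrt (‖x i‖ ^ 2) by
    rw [Real.sqrt_sq (norm_nonneg _)]]
  apply Real.sqrt_le_sqrt
  exact Finset.single_le_sum (f := fun j => ‖x j‖ ^ 2)
    (fun j _ => sq_nonneg _) (mem_univ i)

lemma ceuclNorm_le_sum_abs {k : ℕ} (x : Fin k → ℂ) :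
    ceuclNorm x ≤ ∑ i, ‖x i‖ := by
  rw [ceuclNorm, show (∑ i, ‖x i‖) =
    Real.sqrt ((∑ i, ‖x i‖)^2) by
      rw [Real.sqrt_sq (Finset.sum_nonneg fun i _ => norm_nonneg _)]]
  apply Real.sqrt_le_sqrt
  exact Finset.sum_sq_le_sq_sum_of_nonneg (fun i _ => norm_nonneg _)

lemma ceuclNorm_zero {k : ℕ} : ceuclNorm (0 : Fin k → ℂ) = 0 := by
  simp [ceuclNorm]

lemma ceuclNorm_smul {k : ℕ} (c : ℂ) (x : Fin k → ℂ) :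
    ceuclNorm (c • x) = ‖c‖ * ceuclNorm x := by
  simp only [ceuclNorm, Pi.smul_apply, smul_eq_mul, norm_mul, mul_pow]
  rw [← Finset.mul_sum, Real.sqrt_mul (by positivity)]
  rw [Real.sqrt_sq (norm_nonneg _)]

lemma cSpec2Norm_bddAbove {n m : ℕ} (M : Matrix (Fin n) (Fin m) ℂ) :
    BddAbove ((fun x => ceuclNorm (M.mulVec x)) '' {x | ceuclNorm x ≤ 1}) := by
  refine ⟨∑ i, ∑ j, ‖M i j‖, ?_⟩
  rintro - ⟨y, hy, rfl⟩
  simp only [Set.mem_setOf_eq] at hy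
  calc ceuclNorm (M.mulVec y) ≤ ∑ i, ‖M.mulVec y i‖ := ceuclNorm_le_sum_abs _
    _ ≤ ∑ i, ∑ j, ‖M i j‖ := by
        apply Finset.sum_le_sum
        intro i _
        calc ‖M.mulVec y i‖ ≤ ∑ j, ‖M i j * y j‖ := by
              simpa [Matrix.mulVec, dotProduct] using
                norm_sum_le Finset.univ (fun j => M i j * y j)
          _ ≤ ∑ j, ‖M i j‖ := by
              apply Finset.sum_le_sum
              intro j _
              rw [norm_mul]
              calc ‖M i j‖ * ‖y j‖
                  ≤ ‖M i j‖ * 1 := by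
                    apply mul_le_mul_of_nonneg_left _ (norm_nonneg _)
                    exact le_trans (abs_entry_le_ceuclNorm y j) hy
                _ = ‖M i j‖ := mul_one _

lemma cSpec2Norm_nonneg {n m : ℕ} (M : Matrix (Fin n) (Fin m) ℂ) : 0 ≤ cSpec2Norm M := by
  have h0 : (0:ℝ) ∈ (fun x => ceuclNorm (M.mulVec x)) '' {x | ceuclNorm x ≤ 1} := by
    refine ⟨0, by simp [Set.mem_setOf_eq, ceuclNorm_zero], by simp [ceuclNorm_zero]⟩
  exact le_csSup (cSpec2Norm_bddAbove M) h0

lemma ceuclNorm_mulVec_le {n m : ℕ} (M : Matrix (Fin n) (Fin m) ℂ) (x : Fin m → ℂ) :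
    ceuclNorm (M.mulVec x) ≤ cSpec2Norm M * ceuclNorm x := by
  rcases eq_or_lt_of_le (Real.sqrt_nonneg (∑ i, ‖x i‖ ^ 2)) with h0 | hpos
  · have hx : x = 0 := by
      funext i
      have h1 : ∑ j, ‖x j‖ ^ 2 = 0 := by
        by_contra hne
        have : 0 < ∑ j, ‖x j‖ ^ 2 :=
          lt_of_le_of_ne (Finset.sum_nonneg fun j _ => sq_nonneg _) (Ne.symm hne)
        have := Real.sqrt_pos.2 this
        rw [← h0] at this; exact lt_irrefl _ this
      have h2 : ‖x i‖ ^ 2 = 0 := by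
        have := (Finset.sum_eq_zero_iff_of_nonneg
          (fun j _ => sq_nonneg (‖x j‖))).1 h1 i (mem_univ i)
        exact this
      have := pow_eq_zero_iff (n := 2) (by norm_num) |>.1 h2
      simpa using this
    rw [hx, Matrix.mulVec_zero, ceuclNorm_zero]
    have : cSpec2Norm M * ceuclNorm (0 : Fin m → ℂ) = 0 := by rw [ceuclNorm_zero, mul_zero]
    rw [this]
  · have hc : 0 < ceuclNorm x := hpos
    set c := ceuclNorm x with hcdef
    have hy : ceuclNorm (((c⁻¹ : ℝ) : ℂ) • x) = 1 := by
      rw [ceuclNorm_smul, Complex.norm_real, Real.norm_eq_abs, abs_of_pos (inv_pos.2 hc), ← hcdef]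
      field_simp
    have hmem : ceuclNorm (M.mulVec (((c⁻¹ : ℝ) : ℂ) • x)) ∈
        (fun x => ceuclNorm (M.mulVec x)) '' {x | ceuclNorm x ≤ 1} :=
      ⟨_, by rw [Set.mem_setOf_eq, hy], rfl⟩
    have hle : ceuclNorm (M.mulVec (((c⁻¹ : ℝ) : ℂ) • x)) ≤ cSpec2Norm M :=
      le_csSup (cSpec2Norm_bddAbove M) hmem
    rw [Matrix.mulVec_smul, ceuclNorm_smul, Complex.norm_real, Real.norm_eq_abs,
      abs_of_pos (inv_pos.2 hc)] at hle
    calc ceuclNorm (M.mulVec x) = c * (c⁻¹ * ceuclNorm (M.mulVec x)) := by field_simp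
      _ ≤ c * cSpec2Norm M := by
          apply mul_le_mul_of_nonneg_left _ (le_of_lt hc)
          simpa using hle
      _ = cSpec2Norm M * c := mul_comm _ _

lemma ceuclNorm_diag_mulVec_le {k : ℕ} (v : Fin k → ℂ) (hv : ∀ i, ‖v i‖ ≤ 1)
    (z : Fin k → ℂ) : ceuclNorm ((Matrix.diagonal v).mulVec z) ≤ ceuclNorm z := by
  apply Real.sqrt_le_sqrt
  apply Finset.sum_le_sum
  intro i _
  rw [Matrix.mulVec_diagonal]
  rw [norm_mul, mul_pow]
  calc ‖v i‖ ^ 2 * ‖z i‖ ^ 2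
      ≤ 1 * ‖z i‖ ^ 2 := by
        apply mul_le_mul_of_nonneg_right _ (sq_nonneg _)
        exact pow_le_one₀ (norm_nonneg _) (hv i)
    _ = ‖z i‖ ^ 2 := one_mul _

lemma abs_dotProduct_le {k : ℕ} (u v : Fin k → ℂ) :
    ‖dotProduct u v‖ ≤ ceuclNorm u * ceuclNorm v := by
  calc ‖dotProduct u v‖ ≤ ∑ i, ‖u i * v i‖ := by
        simpa [dotProduct] using norm_sum_le Finset.univ (fun i => u i * v i)
    _ = ∑ i, ‖u i‖ * ‖v i‖ := by simp [norm_mul]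
    _ ≤ ceuclNorm u * ceuclNorm v := by
        rw [ceuclNorm, ceuclNorm, ← Real.sqrt_mul (by positivity)]
        rw [show (∑ i, ‖u i‖ * ‖v i‖) =
          Real.sqrt ((∑ i, ‖u i‖ * ‖v i‖)^2) by
            rw [Real.sqrt_sq (by positivity)]]
        apply Real.sqrt_le_sqrt
        exact Finset.sum_mul_sq_le_sq_mul_sq Finset.univ _ _

lemma conj_pow_eq {d : ℕ} (V N : Matrix (Fin d) (Fin d) ℂ) (hV : IsUnit V.det) (n : ℕ) :
    (V * N * V⁻¹) ^ n = V * N ^ n * V⁻¹ := by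
  induction n with
  | zero => simp [Matrix.mul_nonsing_inv V hV]
  | succ n ih =>
      rw [pow_succ, ih, pow_succ]
      calc V * N ^ n * V⁻¹ * (V * N * V⁻¹) = V * N ^ n * (V⁻¹ * V) * N * V⁻¹ := by
            noncomm_ring
        _ = V * (N ^ n * N) * V⁻¹ := by
            rw [Matrix.nonsing_inv_mul V hV]; noncomm_ring

lemma aeval_conj {d : ℕ} (V N : Matrix (Fin d) (Fin d) ℂ) (hV : IsUnit V.det) (p : ℂ[X]) :
    Polynomial.aeval (V * N * V⁻¹) p = V * (Polynomial.aeval N p) * V⁻¹ := by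
  induction p using Polynomial.induction_on' with
  | add p q hp hq =>
      rw [map_add, map_add, hp, hq]
      noncomm_ring
  | monomial n a =>
      rw [Polynomial.aeval_monomial, Polynomial.aeval_monomial, conj_pow_eq V N hV,
        Algebra.algebraMap_eq_smul_one, smul_mul_assoc, smul_mul_assoc, one_mul,
        Matrix.mul_smul, Matrix.smul_mul, one_mul]

lemma aeval_diagonal {d : ℕ} (v : Fin d → ℂ) (p : ℂ[X]) :
    Polynomial.aeval (Matrix.diagonal v) p = Matrix.diagonal (fun i => p.eval (v i)) := by
  induction p using Polynomial.induction_on' with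
  | add p q hp hq => rw [map_add, hp, hq]; simp [Matrix.diagonal_add]
  | monomial n a =>
      rw [Polynomial.aeval_monomial]
      rw [Matrix.diagonal_pow, Matrix.algebraMap_eq_diagonal, Matrix.diagonal_mul_diagonal]
      funext i
      simp [Polynomial.eval_monomial, Pi.pow_apply, Pi.algebraMap_apply]

lemma prod_XsubC_monic {ι : Type*} (s : Finset ι) (g : ι → ℂ) :
    (∏ i ∈ s, (X - C (g i))).Monic :=
  monic_prod_of_monic _ _ (fun i _ => monic_X_sub_C (g i))

lemma prod_XsubC_natDegree {ι : Type*} (s : Finset ι) (g : ι → ℂ) :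
    (∏ i ∈ s, (X - C (g i))).natDegree = s.card := by
  rw [Polynomial.natDegree_prod_of_monic _ _ (fun i _ => monic_X_sub_C (g i))]
  simp [Polynomial.natDegree_X_sub_C]

lemma coeff_step (q : Polynomial ℂ) (a : ℂ) (n : ℕ) (hdeg : q.natDegree ≤ n)
    (ha : ‖a‖ ≤ 1) :
    ∑ k ∈ range (n + 2), ‖((X - C a) * q).coeff k‖
      ≤ 2 * ∑ k ∈ range (n + 1), ‖q.coeff k‖ := by
  have hexp : (X - C a) * q = X * q - C a * q := by ring
  have hbound : ∀ k, ‖((X - C a) * q).coeff k‖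
      ≤ ‖(X * q).coeff k‖ + ‖q.coeff k‖ := by
    intro k
    rw [hexp, Polynomial.coeff_sub]
    refine le_trans (norm_sub_le _ _) ?_
    refine add_le_add le_rfl ?_
    rw [Polynomial.coeff_C_mul, norm_mul]
    exact mul_le_of_le_one_left (norm_nonneg _) ha
  have h1 : ∑ k ∈ range (n + 2), ‖((X - C a) * q).coeff k‖
      ≤ ∑ k ∈ range (n + 2), (‖(X * q).coeff k‖ + ‖q.coeff k‖) :=
    Finset.sum_le_sum (fun k _ => hbound k)
  have h2 : ∑ k ∈ range (n + 2), ‖(X * q).coeff k‖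
      = ∑ k ∈ range (n + 1), ‖q.coeff k‖ := by
    have hshift := Finset.sum_range_succ' (fun k => ‖(X * q).coeff k‖) (n+1)
    rw [show n + 2 = (n+1) + 1 by omega, hshift]
    have h0 : (X * q).coeff 0 = 0 := by
      rw [Polynomial.mul_coeff_zero, Polynomial.coeff_X_zero, zero_mul]
    simp [Polynomial.coeff_X_mul, h0]
  have h3 : ∑ k ∈ range (n + 2), ‖q.coeff k‖
      = ∑ k ∈ range (n + 1), ‖q.coeff k‖ := by
    rw [Finset.sum_range_succ]
    have hz : q.coeff (n + 1) = 0 :=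
      Polynomial.coeff_eq_zero_of_natDegree_lt (by omega)
    simp [hz]
  rw [Finset.sum_add_distrib, h2, h3] at h1
  linarith

lemma prod_XsubC_coeff_sum {ι : Type*} (s : Finset ι) (g : ι → ℂ)
    (hg : ∀ i ∈ s, ‖g i‖ ≤ 1) :
    ∑ k ∈ range (s.card + 1), ‖(∏ i ∈ s, (X - C (g i))).coeff k‖
      ≤ 2 ^ s.card := by
  classical
  induction s using Finset.induction with
  | empty => simp
  | @insert a s ha ih =>
      have hg' : ∀ i ∈ s, ‖g i‖ ≤ 1 := fun i hi => hg i (mem_insert_of_mem hi)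
      have hga : ‖g a‖ ≤ 1 := hg a (mem_insert_self a s)
      have hdeg : (∏ i ∈ s, (X - C (g i))).natDegree = s.card := prod_XsubC_natDegree s g
      rw [Finset.prod_insert ha, card_insert_of_notMem ha]
      have h1 := coeff_step (∏ i ∈ s, (X - C (g i))) (g a) s.card (le_of_eq hdeg) hga
      have h2 := ih hg'
      rw [show s.card + 1 + 1 = s.card + 2 by omega]
      refine le_trans h1 ?_
      rw [show (2:ℝ) ^ (s.card + 1) = 2 * 2 ^ s.card by ring]
      linarith

lemma mulVec_finset_sum {d : ℕ} {ι : Type*} (s : Finset ι) (M : Matrix (Fin d) (Fin d) ℂ)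
    (v : ι → (Fin d → ℂ)) : M.mulVec (∑ j ∈ s, v j) = ∑ j ∈ s, M.mulVec (v j) :=
  map_sum M.mulVecLin v s

lemma finset_sum_mulVec {d : ℕ} {ι : Type*} (s : Finset ι) (M : ι → Matrix (Fin d) (Fin d) ℂ)
    (v : Fin d → ℂ) : (∑ j ∈ s, M j).mulVec v = ∑ j ∈ s, (M j).mulVec v := by
  funext i
  simp only [Matrix.mulVec, dotProduct, Matrix.sum_apply, Finset.sum_mul,
    Finset.sum_apply]
  rw [Finset.sum_comm]

lemma dotProduct_finset_sum {d : ℕ} {ι : Type*} (s : Finset ι) (w : Fin d → ℂ)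
    (v : ι → (Fin d → ℂ)) :
    dotProduct w (∑ j ∈ s, v j) = ∑ j ∈ s, dotProduct w (v j) := by
  simp only [dotProduct, Finset.sum_apply, Finset.mul_sum]
  rw [Finset.sum_comm]

lemma ceuclNorm_ofReal {k : ℕ} (v : Fin k → ℝ) :
    ceuclNorm (fun i => (v i : ℂ)) = euclNorm v := by
  simp [ceuclNorm, euclNorm, Complex.norm_real, sq_abs]

lemma mulVec_ofReal {k : ℕ} (A : Matrix (Fin k) (Fin k) ℝ) (v : Fin k → ℝ) :
    (A.map Complex.ofReal).mulVec (fun i => (v i : ℂ)) = fun i => ((A.mulVec v i : ℝ) : ℂ) := by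
  funext i
  simp [Matrix.mulVec, dotProduct, Matrix.map_apply]

lemma dotProduct_ofReal {k : ℕ} (w v : Fin k → ℝ) :
    dotProduct (fun i => (w i : ℂ)) (fun i => (v i : ℂ))
      = ((dotProduct w v : ℝ) : ℂ) := by
  simp [dotProduct]

end Aux

/-- **many large past projections, via Cayley–Hamilton.** For a diagonalizable
marginally stable system `x_s = A x_{s−1} + ξ_s`, for any unit `w` there are at least
`min{⌊|wᵀx_t|/(d² 2^{d+1} C_A C_ξ)⌋, ⌊t/d²⌋}` indices `s < t` with
`|wᵀx_s| ≥ |wᵀx_t|/2^{d+1}`. -/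
theorem many_large_past_projections
    (d : ℕ) (hd : 1 ≤ d) (CA Cxi C0 : ℝ) (hCA : 1 ≤ CA) (hCxi : 0 < Cxi) (hC0 : 0 ≤ C0)
    (A : Matrix (Fin d) (Fin d) ℝ) (V D : Matrix (Fin d) (Fin d) ℂ)
    (hV : IsUnit V.det)
    (hdecomp : A.map (Complex.ofReal) = V * D * V⁻¹)
    (hDdiag : ∀ i j, i ≠ j → D i j = 0)
    (hD1 : ∀ i, ‖D i i‖ ≤ 1)
    (hnorm : cSpec2Norm V * cSpec2Norm V⁻¹ ≤ CA)
    (t : ℕ) (x ξ : ℕ → Fin d → ℝ)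
    (hx0 : euclNorm (x 0) ≤ C0)
    (hrec : ∀ s, 1 ≤ s → s ≤ t → x s = A.mulVec (x (s - 1)) + ξ s)
    (hξ : ∀ s, 1 ≤ s → s ≤ t → euclNorm (ξ s) ≤ Cxi)
    (w : Fin d → ℝ) (hw : euclNorm w = 1) :
    min ⌊|dotProduct w (x t)| / ((d : ℝ) ^ 2 * 2 ^ (d + 1) * CA * Cxi)⌋₊ (t / d ^ 2) ≤
      ((Finset.range t).filter fun s =>
        |dotProduct w (x t)| / 2 ^ (d + 1) ≤ |dotProduct w (x s)|).card := by
  classical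
  set M : ℝ := |dotProduct w (x t)| with hM
  have hM0 : 0 ≤ M := abs_nonneg _
  set Ac : Matrix (Fin d) (Fin d) ℂ := A.map Complex.ofReal with hAc
  set cv : (Fin d → ℝ) → (Fin d → ℂ) := fun v i => (v i : ℂ) with hcv
  set δ : Fin d → ℂ := fun i => D i i with hδ
  have hDdiagonal : D = Matrix.diagonal δ := by
    ext i j
    by_cases h : i = j
    · subst h; simp [Matrix.diagonal, hδ]
    · simp [Matrix.diagonal, h, hDdiag i j h]
  have hAcpow : ∀ n, Ac ^ n = V * (D ^ n) * V⁻¹ := by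
    intro n
    rw [hdecomp, conj_pow_eq V D hV n]
  have hCA0 : (0:ℝ) < CA := lt_of_lt_of_le one_pos hCA
  -- uniform power bound
  have hpowbound : ∀ (n : ℕ) (z : Fin d → ℂ),
      ceuclNorm ((Ac ^ n).mulVec z) ≤ CA * ceuclNorm z := by
    intro n z
    rw [hAcpow n]
    have e1 : (V * D ^ n * V⁻¹).mulVec z = V.mulVec ((D ^ n).mulVec (V⁻¹.mulVec z)) := by
      rw [← Matrix.mulVec_mulVec, ← Matrix.mulVec_mulVec]
    rw [e1]
    have hdiagpow : (D : Matrix (Fin d) (Fin d) ℂ) ^ n = Matrix.diagonal (δ ^ n) := by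
      rw [hDdiagonal, Matrix.diagonal_pow]
    have habs : ∀ i, ‖(δ ^ n) i‖ ≤ 1 := by
      intro i
      rw [Pi.pow_apply, norm_pow]
      exact pow_le_one₀ (norm_nonneg _) (hD1 i)
    calc ceuclNorm (V.mulVec ((D ^ n).mulVec (V⁻¹.mulVec z)))
        ≤ cSpec2Norm V * ceuclNorm ((D ^ n).mulVec (V⁻¹.mulVec z)) :=
          ceuclNorm_mulVec_le V _
      _ ≤ cSpec2Norm V * ceuclNorm (V⁻¹.mulVec z) := by
          apply mul_le_mul_of_nonneg_left _ (cSpec2Norm_nonneg V)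
          rw [hdiagpow]
          exact ceuclNorm_diag_mulVec_le _ habs _
      _ ≤ cSpec2Norm V * (cSpec2Norm V⁻¹ * ceuclNorm z) := by
          apply mul_le_mul_of_nonneg_left _ (cSpec2Norm_nonneg V)
          exact ceuclNorm_mulVec_le V⁻¹ z
      _ = (cSpec2Norm V * cSpec2Norm V⁻¹) * ceuclNorm z := by ring
      _ ≤ CA * ceuclNorm z :=
          mul_le_mul_of_nonneg_right hnorm (ceuclNorm_nonneg z)
  have hcw1 : ceuclNorm (cv w) = 1 := by rw [hcv, ceuclNorm_ofReal, hw]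
  -- complexified recurrence
  have hrecC : ∀ s : ℕ, s + 1 ≤ t → cv (x (s+1)) = Ac.mulVec (cv (x s)) + cv (ξ (s+1)) := by
    intro s hs
    have h := hrec (s+1) (by omega) hs
    have h1 : x (s+1) = A.mulVec (x s) + ξ (s+1) := by simpa using h
    funext i
    rw [hcv]
    simp only [h1, Pi.add_apply, Complex.ofReal_add]
    have := congrFun (mulVec_ofReal A (x s)) i
    rw [hAc, this]
  -- error expansion
  have herr : ∀ (n sb : ℕ), sb + n ≤ t →
      cv (x (sb+n)) = (Ac ^ n).mulVec (cv (x sb))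
        + ∑ j ∈ range n, (Ac ^ (n-1-j)).mulVec (cv (ξ (sb+j+1))) := by
    intro n
    induction n with
    | zero => intro sb _; simp [Matrix.one_mulVec]
    | succ n ih =>
        intro sb hsb
        have hs : sb + n ≤ t := by omega
        have hstep := hrecC (sb+n) (by omega)
        have e0 : sb + (n+1) = (sb+n) + 1 := by omega
        rw [e0, hstep, ih sb hs]
        rw [Matrix.mulVec_add, mulVec_finset_sum]
        have e1 : Ac.mulVec ((Ac ^ n).mulVec (cv (x sb))) = (Ac ^ (n+1)).mulVec (cv (x sb)) := by
          rw [Matrix.mulVec_mulVec, ← pow_succ']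
        have e2 : ∀ j ∈ range n, Ac.mulVec ((Ac ^ (n-1-j)).mulVec (cv (ξ (sb+j+1))))
            = (Ac ^ (n-j)).mulVec (cv (ξ (sb+j+1))) := by
          intro j hj
          have hj' := mem_range.1 hj
          rw [Matrix.mulVec_mulVec, ← pow_succ', show n - 1 - j + 1 = n - j from by omega]
        rw [Finset.sum_congr rfl e2, e1]
        rw [Finset.sum_range_succ (fun j => (Ac ^ (n+1-1-j)).mulVec (cv (ξ (sb+j+1))))]
        have e3 : ∀ j, (n+1-1-j) = n - j := by intro j; omega
        simp only [e3, Nat.sub_self, pow_zero, Matrix.one_mulVec]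
        rw [add_assoc]
  -- error bound on projections
  have herrBound : ∀ (sb n : ℕ), sb + n ≤ t →
      ‖dotProduct (cv w) (cv (x (sb+n)))
        - dotProduct (cv w) ((Ac ^ n).mulVec (cv (x sb)))‖
      ≤ (n : ℝ) * (CA * Cxi) := by
    intro sb n hsb
    rw [herr n sb hsb, dotProduct_add]
    have e : ∀ (a b : ℂ), a + b - a = b := by intro a b; ring
    rw [e]
    calc ‖dotProduct (cv w)
          (∑ j ∈ range n, (Ac ^ (n-1-j)).mulVec (cv (ξ (sb+j+1))))‖
        ≤ ceuclNorm (cv w) * ceuclNorm (∑ j ∈ range n, (Ac ^ (n-1-j)).mulVec (cv (ξ (sb+j+1)))) :=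
          abs_dotProduct_le _ _
      _ = ceuclNorm (∑ j ∈ range n, (Ac ^ (n-1-j)).mulVec (cv (ξ (sb+j+1)))) := by
          rw [hcw1, one_mul]
      _ ≤ ∑ j ∈ range n, ceuclNorm ((Ac ^ (n-1-j)).mulVec (cv (ξ (sb+j+1)))) :=
          ceuclNorm_sum_le _ _
      _ ≤ ∑ _j ∈ range n, CA * Cxi := by
          apply Finset.sum_le_sum
          intro j hj
          have hj' := mem_range.1 hj
          calc ceuclNorm ((Ac ^ (n-1-j)).mulVec (cv (ξ (sb+j+1))))
              ≤ CA * ceuclNorm (cv (ξ (sb+j+1))) := hpowbound _ _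
            _ ≤ CA * Cxi := by
                apply mul_le_mul_of_nonneg_left _ (le_of_lt hCA0)
                rw [hcv, ceuclNorm_ofReal]
                exact hξ (sb+j+1) (by omega) (by omega)
      _ = (n : ℝ) * (CA * Cxi) := by
          rw [Finset.sum_const, card_range, nsmul_eq_mul]
  -- core claim: for each valid step size h there is a large index
  have hcore : ∀ h : ℕ, 1 ≤ h → d * h ≤ t →
      (h : ℝ) * ((d:ℝ) * 2^(d+1) * CA * Cxi) ≤ M →
      ∃ i, i < d ∧ M / 2^(d+1) ≤ |dotProduct w (x (t - d*h + i*h))| := by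
    intro h h1 hdh hnoise
    set m := t - d*h with hm
    have hmt : m + d*h = t := by omega
    set μ : Fin d → ℂ := fun i => δ i ^ h with hμdef
    have hμ : ∀ i, ‖μ i‖ ≤ 1 := by
      intro i
      rw [hμdef, norm_pow]
      exact pow_le_one₀ (norm_nonneg _) (hD1 i)
    set p : Polynomial ℂ := ∏ i, (Polynomial.X - Polynomial.C (μ i)) with hp
    have hmonic : p.Monic := prod_XsubC_monic _ _
    have hdeg : p.natDegree = d := by
      rw [hp, prod_XsubC_natDegree]
      simp
    set a : ℕ → ℂ := fun i => p.coeff i with ha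
    have had : a d = 1 := by
      rw [ha, ← hdeg]
      exact hmonic.coeff_natDegree
    have hasum : ∑ k ∈ range d, ‖a k‖ ≤ 2^d - 1 := by
      have h1' := prod_XsubC_coeff_sum Finset.univ μ (fun i _ => hμ i)
      rw [Finset.card_univ, Fintype.card_fin] at h1'
      rw [Finset.sum_range_succ] at h1'
      rw [← hp] at h1'
      have had1 : ‖p.coeff d‖ = 1 := by
        rw [show p.coeff d = a d from rfl, had]; simp
      rw [had1] at h1'
      have heqs : ∑ k ∈ range d, ‖a k‖
          = ∑ k ∈ range d, ‖p.coeff k‖ := rfl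
      rw [heqs]
      linarith
    -- the annihilation identity
    have haev : ∑ i ∈ range (d+1), a i • (Ac^h)^i = 0 := by
      have hz : Polynomial.aeval (Ac^h) p = 0 := by
        rw [hAcpow h, aeval_conj V (D^h) hV p, hDdiagonal, Matrix.diagonal_pow,
          aeval_diagonal]
        have hev : ∀ i, p.eval ((δ ^ h) i) = 0 := by
          intro i
          rw [hp, Polynomial.eval_prod]
          apply Finset.prod_eq_zero (Finset.mem_univ i)
          simp [hμdef, Pi.pow_apply]
        simp only [hev]
        simp [Matrix.diagonal_zero]
      have hsum : p = ∑ i ∈ range (d+1), Polynomial.monomial i (a i) :=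
        Polynomial.as_sum_range' p (d+1) (by omega)
      have : Polynomial.aeval (Ac^h) p
          = ∑ i ∈ range (d+1), a i • (Ac^h)^i := by
        rw [hsum, map_sum]
        apply Finset.sum_congr rfl
        intro i _
        rw [Polynomial.aeval_monomial, Algebra.algebraMap_eq_smul_one, smul_mul_assoc, one_mul]
      rw [← this, hz]
    set q : ℕ → ℂ := fun i => dotProduct (cv w) (cv (x (m + i*h))) with hq
    set r : ℕ → ℂ := fun i =>
      dotProduct (cv w) ((Ac ^ (i*h)).mulVec (cv (x m))) with hr
    have hqr : ∀ i, i ≤ d → ‖q i - r i‖ ≤ (d:ℝ) * h * (CA * Cxi) := by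
      intro i hi
      have hle : m + i*h ≤ t := by
        have : i * h ≤ d * h := Nat.mul_le_mul_right h hi
        omega
      have := herrBound m (i*h) hle
      refine le_trans this ?_
      have : ((i*h : ℕ) : ℝ) ≤ (d:ℝ) * h := by
        push_cast
        have : (i:ℝ) ≤ d := by exact_mod_cast hi
        nlinarith [show (0:ℝ) ≤ (h:ℕ) from Nat.cast_nonneg h]
      apply mul_le_mul_of_nonneg_right this
      positivity
    have hr0 : ∑ i ∈ range (d+1), a i * r i = 0 := by
      have e1 : ∀ i, a i * r i
          = dotProduct (cv w) ((a i • (Ac^h)^i).mulVec (cv (x m))) := by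
        intro i
        rw [hr]
        rw [Matrix.smul_mulVec, dotProduct_smul]
        rw [show (Ac^h)^i = Ac^(i*h) by rw [← pow_mul, mul_comm]]
        simp [smul_eq_mul]
      calc ∑ i ∈ range (d+1), a i * r i
          = ∑ i ∈ range (d+1),
              dotProduct (cv w) ((a i • (Ac^h)^i).mulVec (cv (x m))) :=
            Finset.sum_congr rfl (fun i _ => e1 i)
        _ = dotProduct (cv w)
              ((∑ i ∈ range (d+1), a i • (Ac^h)^i).mulVec (cv (x m))) := by
            rw [finset_sum_mulVec, dotProduct_finset_sum]
        _ = 0 := by rw [haev, Matrix.zero_mulVec, dotProduct_zero]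
    have hqd : ‖q d‖ = M := by
      have e0 : q d = dotProduct (cv w) (cv (x (m + d*h))) := rfl
      rw [e0, hmt]
      simp only [hcv]
      rw [dotProduct_ofReal, Complex.norm_real, Real.norm_eq_abs]
    have hqabs : ∀ i, ‖q i‖ = |dotProduct w (x (m + i*h))| := by
      intro i
      have e0 : q i = dotProduct (cv w) (cv (x (m + i*h))) := rfl
      rw [e0]
      simp only [hcv]
      rw [dotProduct_ofReal, Complex.norm_real, Real.norm_eq_abs]
    -- key inequality
    have hkey : M ≤ (2:ℝ)^d * ((d:ℝ) * h * (CA * Cxi))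
        + ∑ i ∈ range d, ‖a i‖ * ‖q i‖ := by
      have e2 : ∑ i ∈ range (d+1), a i * q i
          = ∑ i ∈ range (d+1), a i * (q i - r i) := by
        have e2' : ∑ i ∈ range (d+1), a i * (q i - r i)
            = ∑ i ∈ range (d+1), a i * q i - ∑ i ∈ range (d+1), a i * r i := by
          rw [← Finset.sum_sub_distrib]
          apply Finset.sum_congr rfl
          intro i _
          ring
        rw [e2', hr0, sub_zero]
      have e3 : q d = ∑ i ∈ range (d+1), a i * (q i - r i) - ∑ i ∈ range d, a i * q i := by
        have e4 : ∑ i ∈ range (d+1), a i * q i = (∑ i ∈ range d, a i * q i) + q d := by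
          rw [Finset.sum_range_succ, had, one_mul]
        rw [← e2, e4]; ring
      have habs1 : ‖∑ i ∈ range (d+1), a i * (q i - r i)‖
          ≤ (2:ℝ)^d * ((d:ℝ) * h * (CA * Cxi)) := by
        calc ‖∑ i ∈ range (d+1), a i * (q i - r i)‖
            ≤ ∑ i ∈ range (d+1), ‖a i * (q i - r i)‖ :=
              norm_sum_le _ _
          _ ≤ ∑ i ∈ range (d+1), ‖a i‖ * ((d:ℝ) * h * (CA * Cxi)) := by
              apply Finset.sum_le_sum
              intro i hi
              rw [norm_mul]
              exact mul_le_mul_of_nonneg_left (hqr i (Nat.lt_succ_iff.mp (mem_range.1 hi)))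
                (norm_nonneg _)
          _ = (∑ i ∈ range (d+1), ‖a i‖) * ((d:ℝ) * h * (CA * Cxi)) := by
              rw [← Finset.sum_mul]
          _ ≤ (2:ℝ)^d * ((d:ℝ) * h * (CA * Cxi)) := by
              apply mul_le_mul_of_nonneg_right _ (by positivity)
              rw [Finset.sum_range_succ, had]
              simp only [norm_one]
              linarith [hasum]
      have habs2 : ‖∑ i ∈ range d, a i * q i‖
          ≤ ∑ i ∈ range d, ‖a i‖ * ‖q i‖ := by
        refine le_trans (norm_sum_le _ _) ?_
        apply Finset.sum_le_sum
        intro i _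
        rw [norm_mul]
      calc M = ‖q d‖ := hqd.symm
        _ ≤ ‖∑ i ∈ range (d+1), a i * (q i - r i)‖
            + ‖∑ i ∈ range d, a i * q i‖ := by
            rw [e3]; exact norm_sub_le _ _
        _ ≤ (2:ℝ)^d * ((d:ℝ) * h * (CA * Cxi))
            + ∑ i ∈ range d, ‖a i‖ * ‖q i‖ :=
            add_le_add habs1 habs2
    have hnoise2 : (2:ℝ)^d * ((d:ℝ) * h * (CA * Cxi)) ≤ M / 2 := by
      have heq2 : (h:ℝ) * ((d:ℝ) * 2^(d+1) * CA * Cxi)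
          = 2 * ((2:ℝ)^d * ((d:ℝ) * h * (CA * Cxi))) := by
        rw [pow_succ]
        ring
      rw [heq2] at hnoise
      linarith
    -- conclude by contradiction
    by_contra hcon
    push_neg at hcon
    have hsmall : ∀ i, i < d → ‖q i‖ < M / 2^(d+1) := by
      intro i hi
      rw [hqabs i]
      exact hcon i hi
    have hMpos : 0 < M := by
      have hlt0 := hsmall 0 (by omega)
      have h0 : (0:ℝ) ≤ ‖q 0‖ := norm_nonneg _
      have hp2 : (0:ℝ) < 2^(d+1) := by positivity
      have hq0 : 0 < M / 2^(d+1) := lt_of_le_of_lt h0 hlt0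
      have hcanc : M / 2^(d+1) * 2^(d+1) = M := div_mul_cancel₀ M (ne_of_gt hp2)
      have := mul_pos hq0 hp2
      rw [hcanc] at this
      exact this
    have hsum2 : ∑ i ∈ range d, ‖a i‖ * ‖q i‖
        ≤ (2^d - 1) * (M / 2^(d+1)) := by
      calc ∑ i ∈ range d, ‖a i‖ * ‖q i‖
          ≤ ∑ i ∈ range d, ‖a i‖ * (M / 2^(d+1)) := by
            apply Finset.sum_le_sum
            intro i hi
            exact mul_le_mul_of_nonneg_left (le_of_lt (hsmall i (mem_range.1 hi)))
              (norm_nonneg _)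
        _ = (∑ i ∈ range d, ‖a i‖) * (M / 2^(d+1)) := by rw [← Finset.sum_mul]
        _ ≤ (2^d - 1) * (M / 2^(d+1)) := by
            apply mul_le_mul_of_nonneg_right hasum
            positivity
    have hfin : (2^d - 1 : ℝ) * (M / 2^(d+1)) < M / 2 := by
      have hpow : (0:ℝ) < 2^(d+1) := by positivity
      have e5 : (2:ℝ)^d * (M / 2^(d+1)) = M / 2 := by
        rw [pow_succ]
        field_simp
      have hlt : (2^d - 1 : ℝ) * (M / 2^(d+1)) < (2:ℝ)^d * (M / 2^(d+1)) := by
        apply mul_lt_mul_of_pos_right _ (by positivity)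
        linarith
      rw [e5] at hlt
      exact hlt
    linarith [hkey, hnoise2, hsum2, hfin]
  -- counting
  set S := (Finset.range t).filter fun s =>
      |dotProduct w (x t)| / 2 ^ (d + 1) ≤ |dotProduct w (x s)| with hS
  set K' : ℝ := (d:ℝ) * 2^(d+1) * CA * Cxi with hK'
  have hK'pos : 0 < K' := by
    rw [hK']
    have : (0:ℝ) < (d:ℝ) := by exact_mod_cast hd
    positivity
  set H : ℕ := min ⌊M / K'⌋₊ (t / d) with hH
  have hsel : ∀ h ∈ Finset.Icc 1 H, ∃ pk : ℕ × ℕ,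
      pk.1 ∈ S ∧ pk.2 ∈ Finset.Icc 1 d ∧ pk.1 + pk.2 * h = t := by
    intro h hh
    rw [Finset.mem_Icc] at hh
    obtain ⟨h1, hhH⟩ := hh
    have hhtd : h ≤ t / d := le_trans hhH (min_le_right _ _)
    have hdh : d * h ≤ t := by
      rw [mul_comm]
      exact (Nat.le_div_iff_mul_le (by omega : 0 < d)).1 hhtd
    have hhM : (h:ℝ) * K' ≤ M := by
      have hfl : h ≤ ⌊M / K'⌋₊ := le_trans hhH (min_le_left _ _)
      have : (h:ℝ) ≤ M / K' := by
        calc (h:ℝ) ≤ (⌊M / K'⌋₊ : ℝ) := by exact_mod_cast hfl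
          _ ≤ M / K' := Nat.floor_le (by positivity)
      calc (h:ℝ) * K' ≤ (M / K') * K' := mul_le_mul_of_nonneg_right this (le_of_lt hK'pos)
        _ = M := by field_simp
    obtain ⟨i, hid, hbig⟩ := hcore h h1 hdh hhM
    refine ⟨(t - d*h + i*h, d - i), ?_, ?_, ?_⟩
    · rw [hS, Finset.mem_filter]
      constructor
      · rw [Finset.mem_range]
        have hih : (i+1) * h ≤ d * h := Nat.mul_le_mul_right h hid
        have hexp : (i+1) * h = i*h + h := by ring
        omega
      · exact hbig
    · rw [Finset.mem_Icc]; omega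
    · have e6 : i*h + (d-i)*h = d*h := by
        rw [← Nat.add_mul]
        congr 1
        omega
      simp only []
      rw [add_assoc, e6, Nat.sub_add_cancel hdh]
  have hcount : H ≤ S.card * d := by
    have hmaps : ∀ h ∈ Finset.Icc 1 H,
        (fun h => if hh : ∃ pk : ℕ × ℕ, pk.1 ∈ S ∧ pk.2 ∈ Finset.Icc 1 d ∧ pk.1 + pk.2 * h = t
          then Classical.choose hh else (0,0)) h ∈ S ×ˢ Finset.Icc 1 d := by
      intro h hh
      have hex := hsel h hh
      dsimp only
      rw [dif_pos hex]
      obtain ⟨hp1, hp2, _⟩ := Classical.choose_spec hex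
      rw [Finset.mem_product]
      exact ⟨hp1, hp2⟩
    have hinj : Set.InjOn (fun h =>
        if hh : ∃ pk : ℕ × ℕ, pk.1 ∈ S ∧ pk.2 ∈ Finset.Icc 1 d ∧ pk.1 + pk.2 * h = t
          then Classical.choose hh else (0,0)) ↑(Finset.Icc 1 H) := by
      intro h1 hh1 h2 hh2 heq
      simp only [Finset.coe_Icc, Set.mem_Icc] at hh1 hh2
      have hex1 := hsel h1 (Finset.mem_Icc.2 hh1)
      have hex2 := hsel h2 (Finset.mem_Icc.2 hh2)
      simp only [dif_pos hex1, dif_pos hex2] at heq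
      obtain ⟨_, hk1, he1⟩ := Classical.choose_spec hex1
      obtain ⟨_, hk2, he2⟩ := Classical.choose_spec hex2
      rw [heq] at he1
      rw [Finset.mem_Icc] at hk2
      have : (Classical.choose hex2).2 * h1 = (Classical.choose hex2).2 * h2 := by omega
      exact Nat.eq_of_mul_eq_mul_left (by omega) this
    have := Finset.card_le_card_of_injOn _ hmaps hinj
    rw [Nat.card_Icc] at this
    rw [Finset.card_product, Nat.card_Icc] at this
    simpa using this
  -- final arithmetic
  have hfinal : d * min ⌊M / ((d:ℝ)^2 * 2^(d+1) * CA * Cxi)⌋₊ (t / d^2) ≤ H := by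
    have hKK' : (d:ℝ)^2 * 2^(d+1) * CA * Cxi = (d:ℝ) * K' := by
      rw [hK']; ring
    have hfl1 : d * ⌊M / ((d:ℝ)^2 * 2^(d+1) * CA * Cxi)⌋₊ ≤ ⌊M / K'⌋₊ := by
      apply Nat.le_floor
      push_cast
      have hfl : (⌊M / ((d:ℝ)^2 * 2^(d+1) * CA * Cxi)⌋₊ : ℝ)
          ≤ M / ((d:ℝ)^2 * 2^(d+1) * CA * Cxi) := by
        apply Nat.floor_le
        rw [hKK']
        positivity
      have hd0 : (0:ℝ) < (d:ℝ) := by exact_mod_cast hd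
      calc (d:ℝ) * (⌊M / ((d:ℝ)^2 * 2^(d+1) * CA * Cxi)⌋₊ : ℝ)
          ≤ (d:ℝ) * (M / ((d:ℝ)^2 * 2^(d+1) * CA * Cxi)) :=
            mul_le_mul_of_nonneg_left hfl (le_of_lt hd0)
        _ = M / K' := by
            rw [hKK']
            have hd0'' : (d:ℝ) ≠ 0 := by
              have : (0:ℝ) < (d:ℝ) := by exact_mod_cast hd
              exact ne_of_gt this
            field_simp
    have hfl2 : d * (t / d^2) ≤ t / d := by
      have e7 : t / d^2 = (t / d) / d := by
        rw [pow_two, Nat.div_div_eq_div_mul]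
      rw [e7]
      calc d * ((t / d) / d) = ((t/d)/d) * d := mul_comm _ _
        _ ≤ t / d := Nat.div_mul_le_self _ _
    rcases le_total (⌊M / ((d:ℝ)^2 * 2^(d+1) * CA * Cxi)⌋₊) (t / d^2) with hmin | hmin
    · rw [min_eq_left hmin, hH]
      apply le_min hfl1
      calc d * ⌊M / ((d:ℝ)^2 * 2^(d+1) * CA * Cxi)⌋₊ ≤ d * (t / d^2) :=
        Nat.mul_le_mul_left d hmin
        _ ≤ t / d := hfl2
    · rw [min_eq_right hmin, hH]
      apply le_min _ hfl2
      calc d * (t / d^2) ≤ d * ⌊M / ((d:ℝ)^2 * 2^(d+1) * CA * Cxi)⌋₊ :=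
        Nat.mul_le_mul_left d hmin
        _ ≤ ⌊M / K'⌋₊ := hfl1
  have : d * min ⌊M / ((d:ℝ)^2 * 2^(d+1) * CA * Cxi)⌋₊ (t / d^2) ≤ S.card * d :=
    le_trans hfinal hcount
  rw [mul_comm (S.card) d] at this
  exact Nat.le_of_mul_le_mul_left this (by omega)
end

section
/- There is an absolute constant K ≥ 1 such that for every k ≥ 1 and every z_1, …, z_k ∈ ℂ with |z_i| ≤ 1 for all i, there exists a polynomial P(z) = Σ_{j=0}^{n} c_j z^j with complex coefficients of degree n ≤ K·k²·(1 + ln k) such that: (i) ∏_{i=1}^{k} (z − z_i) divides P(z); (ii) P is monic, i.e. c_n = 1; and (iii) |c_j| ≤ 11 for every 0 ≤ j ≤ n. -/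
open Polynomial

open Finset

set_option maxRecDepth 10000




/-- Newton-basis coefficients of `X^m` modulo `∏ (X - w i)`. -/
def cfAux (w : ℕ → ℂ) : ℕ → ℕ → ℂ
  | 0 => fun j => if j = 0 then 1 else 0
  | m + 1 => fun j =>
      if j = 0 then w 0 * cfAux w m 0
      else cfAux w m (j - 1) + w j * cfAux w m j

lemma cfAux_abs_le (w : ℕ → ℂ) (hw : ∀ i, ‖w i‖ ≤ 1) :
    ∀ m j, ‖cfAux w m j‖ ≤ (m.choose j : ℝ) := by
  intro m
  induction m with
  | zero =>
    intro j
    cases j with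
    | zero => simp [cfAux]
    | succ jj => simp [cfAux, Nat.choose_succ_self]
  | succ m ih =>
    intro j
    cases j with
    | zero =>
      simp only [cfAux, if_true, norm_mul]
      calc ‖w 0‖ * ‖cfAux w m 0‖
          ≤ 1 * (m.choose 0 : ℝ) := by
            apply mul_le_mul (hw 0) (ih 0) (by positivity) zero_le_one
        _ ≤ ((m+1).choose 0 : ℝ) := by simp
    | succ jj =>
      simp only [cfAux, if_neg (Nat.succ_ne_zero jj), Nat.succ_sub_one]
      calc ‖cfAux w m jj + w (jj+1) * cfAux w m (jj+1)‖
          ≤ ‖cfAux w m jj‖ + ‖w (jj+1) * cfAux w m (jj+1)‖ :=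
            norm_add_le _ _
        _ ≤ (m.choose jj : ℝ) + 1 * (m.choose (jj+1) : ℝ) := by
            refine add_le_add (ih jj) ?_
            rw [norm_mul]
            exact mul_le_mul (hw _) (ih _) (by positivity) zero_le_one
        _ = ((m+1).choose (jj+1) : ℝ) := by
            rw [one_mul, Nat.choose_succ_succ]
            push_cast
            ring




/-- Partial products `∏_{i<j} (X - w i)`. -/
noncomputable def NN (w : ℕ → ℂ) (j : ℕ) : Polynomial ℂ :=
  ∏ i ∈ range j, (X - C (w i))

lemma NN_succ (w : ℕ → ℂ) (j : ℕ) : NN w (j+1) = NN w j * (X - C (w j)) :=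
  prod_range_succ _ _

lemma key_dvd (w : ℕ → ℂ) (K : ℕ) (m : ℕ) :
    NN w (K+1) ∣ X ^ m - ∑ j ∈ range (K+1), C (cfAux w m j) * NN w j := by
  induction m with
  | zero =>
    have hs : ∑ j ∈ range (K+1), C (cfAux w 0 j) * NN w j = 1 := by
      rw [Finset.sum_eq_single 0]
      · simp [cfAux, NN]
      · intro b _ hb
        simp [cfAux, hb]
      · intro h
        exact absurd (Finset.mem_range.2 (Nat.succ_pos K)) h
    rw [hs]
    simp
  | succ m ih =>
    have hid : X ^ (m+1) - ∑ j ∈ range (K+1), C (cfAux w (m+1) j) * NN w j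
        = X * (X ^ m - ∑ j ∈ range (K+1), C (cfAux w m j) * NN w j)
          + C (cfAux w m K) * NN w (K+1) := by
      have hterm : ∀ j, X * (C (cfAux w m j) * NN w j)
          = C (cfAux w m j) * NN w (j+1) + C (w j * cfAux w m j) * NN w j := by
        intro j
        rw [NN_succ, map_mul]
        ring
      have hXS : X * ∑ j ∈ range (K+1), C (cfAux w m j) * NN w j
          = (∑ j ∈ range K, C (cfAux w m j) * NN w (j+1) + C (cfAux w m K) * NN w (K+1))
            + (∑ j ∈ range K, C (w (j+1) * cfAux w m (j+1)) * NN w (j+1)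
               + C (w 0 * cfAux w m 0) * NN w 0) := by
        rw [Finset.mul_sum]
        calc ∑ j ∈ range (K+1), X * (C (cfAux w m j) * NN w j)
            = ∑ j ∈ range (K+1),
                (C (cfAux w m j) * NN w (j+1) + C (w j * cfAux w m j) * NN w j) := by
              exact Finset.sum_congr rfl fun j _ => hterm j
          _ = (∑ j ∈ range (K+1), C (cfAux w m j) * NN w (j+1))
              + ∑ j ∈ range (K+1), C (w j * cfAux w m j) * NN w j := by
              rw [Finset.sum_add_distrib]
          _ = _ := by
              rw [Finset.sum_range_succ (fun j => C (cfAux w m j) * NN w (j+1)),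
                Finset.sum_range_succ' (fun j => C (w j * cfAux w m j) * NN w j)]
      have hS' : ∑ j ∈ range (K+1), C (cfAux w (m+1) j) * NN w j
          = ∑ j ∈ range K,
              (C (cfAux w m j) * NN w (j+1) + C (w (j+1) * cfAux w m (j+1)) * NN w (j+1))
            + C (w 0 * cfAux w m 0) * NN w 0 := by
        rw [Finset.sum_range_succ' (fun j => C (cfAux w (m+1) j) * NN w j)]
        have h0 : cfAux w (m+1) 0 = w 0 * cfAux w m 0 := by simp [cfAux]
        have hsucc : ∀ j : ℕ, cfAux w (m+1) (j+1)
            = cfAux w m j + w (j+1) * cfAux w m (j+1) := fun j => by simp [cfAux]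
        rw [h0]
        congr 1
        exact Finset.sum_congr rfl fun j _ => by rw [hsucc j, map_add, add_mul]
      rw [hS', Finset.sum_add_distrib, mul_sub, hXS]
      ring
    rw [hid]
    exact dvd_add (Dvd.dvd.mul_left ih X) (Dvd.intro_left _ rfl)



lemma NN_monic (w : ℕ → ℂ) (j : ℕ) : (NN w j).Monic :=
  monic_prod_of_monic _ _ fun i _ => monic_X_sub_C (w i)

lemma NN_natDegree (w : ℕ → ℂ) (j : ℕ) : (NN w j).natDegree = j := by
  induction j with
  | zero => simp [NN]
  | succ j ih =>
    rw [NN_succ, Monic.natDegree_mul (NN_monic w j) (monic_X_sub_C _), ih, natDegree_X_sub_C]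

lemma NN_coeff_abs_le (w : ℕ → ℂ) (hw : ∀ i, ‖w i‖ ≤ 1) (j : ℕ) :
    ∀ t, ‖(NN w j).coeff t‖ ≤ (2:ℝ) ^ j := by
  induction j with
  | zero =>
    intro t
    rcases Nat.eq_zero_or_pos t with rfl | ht
    · simp [NN]
    · simp [NN, Polynomial.coeff_one, Nat.pos_iff_ne_zero.1 ht]
  | succ j ih =>
    intro t
    rw [NN_succ, mul_sub, coeff_sub, coeff_mul_C]
    have h1 : ‖(NN w j * X).coeff t‖ ≤ (2:ℝ)^j := by
      cases t with
      | zero => rw [coeff_mul_X_zero]; simp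
      | succ t => rw [coeff_mul_X]; exact ih t
    have h2 : ‖(NN w j).coeff t * w j‖ ≤ (2:ℝ)^j := by
      rw [norm_mul]
      calc ‖(NN w j).coeff t‖ * ‖w j‖
          ≤ (2:ℝ)^j * 1 := mul_le_mul (ih t) (hw j) (by positivity) (by positivity)
        _ = (2:ℝ)^j := mul_one _
    have h3 := norm_sub_le ((NN w j * X).coeff t) ((NN w j).coeff t * w j)
    have h4 : (2:ℝ)^(j+1) = 2^j + 2^j := by ring
    rw [h4]
    exact h3.trans (add_le_add h1 h2)

lemma count_lt (k n M L : ℕ) (hk : 1 ≤ k) (hL : L = Nat.log 2 k)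
    (hn : n = 300 * (k^2 * (L + 4))) (hM : M = 4^k * (n+1) * (n+k+1)^k) :
    ((2*M+1) * (2*M+1))^k < 2^(n+1) := by
  have hk2 : k < 2^(L+1) := hL ▸ Nat.lt_pow_succ_log_self (by norm_num) k
  have hL1 : L + 1 ≤ 2^L := Nat.lt_two_pow_self (n := L)
  have hL4 : L + 4 ≤ 2^(L+2) := by
    calc L + 4 ≤ 4*(L+1) := by omega
      _ ≤ 4 * 2^L := by omega
      _ = 2^(L+2) := by rw [pow_add]; ring
  have hksq : k^2 ≤ 2^(2*L+2) := by
    calc k^2 ≤ (2^(L+1))^2 := Nat.pow_le_pow_left (le_of_lt hk2) 2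
      _ = 2^(2*L+2) := by rw [← pow_mul]; ring_nf
  have hA : k^2*(L+4) ≤ 2^(2*L+2) * 2^(L+2) := Nat.mul_le_mul hksq hL4
  have hnk : n + k + 1 ≤ 302*(k^2*(L+4)) := by
    have h1 : k + 1 ≤ 2*(k^2*(L+4)) := by nlinarith
    omega
  have hflat : n + k + 1 ≤ 2^(3*L+13) := by
    calc n + k + 1 ≤ 302*(k^2*(L+4)) := hnk
      _ ≤ 2^9 * (2^(2*L+2) * 2^(L+2)) := Nat.mul_le_mul (by norm_num) hA
      _ = 2^(3*L+13) := by rw [← pow_add, ← pow_add]; ring_nf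
  have hM1 : 1 ≤ M := by
    rw [hM]
    exact Nat.mul_pos (Nat.mul_pos (pow_pos (by norm_num) k) (Nat.succ_pos n))
      (pow_pos (by omega) k)
  have hM4 : 4*M ≤ 2^((3*L+15)*(k+1)) := by
    calc 4*M = 4^(k+1) * ((n+1) * (n+k+1)^k) := by rw [hM]; ring
      _ ≤ 4^(k+1) * ((n+k+1) * (n+k+1)^k) := by
          exact Nat.mul_le_mul_left _ (Nat.mul_le_mul_right _ (by omega))
      _ = 4^(k+1) * (n+k+1)^(k+1) := by rw [← pow_succ']
      _ ≤ (2^2)^(k+1) * (2^(3*L+13))^(k+1) := by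
          exact Nat.mul_le_mul (by norm_num) (Nat.pow_le_pow_left hflat _)
      _ = 2^((3*L+15)*(k+1)) := by rw [← pow_mul, ← pow_mul, ← pow_add]; ring_nf
  have h2M : 2*M+1 ≤ 2^((3*L+15)*(k+1)) := by omega
  have hks : k ≤ k^2 := Nat.le_self_pow (by norm_num) k
  have e0 : 2*k*(k+1) ≤ 4*k^2 := by
    have e0' : 2*k*(k+1) = 2*k^2 + 2*k := by ring
    omega
  have hexp : 2*((3*L+15)*(k+1))*k < n + 1 := by
    have e1 : 2*((3*L+15)*(k+1))*k = (3*L+15)*(2*k*(k+1)) := by ring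
    have e2 : (3*L+15)*(2*k*(k+1)) ≤ (3*L+15)*(4*k^2) := Nat.mul_le_mul_left _ e0
    have e3 : (3*L+15)*(4*k^2) = (12*L+60)*k^2 := by ring
    have e4 : (12*L+60)*k^2 ≤ (300*(L+4))*k^2 := Nat.mul_le_mul_right _ (by omega)
    have e5 : (300*(L+4))*k^2 = n := by rw [hn]; ring
    omega
  calc ((2*M+1) * (2*M+1))^k
      ≤ (2^((3*L+15)*(k+1)) * 2^((3*L+15)*(k+1)))^k :=
        Nat.pow_le_pow_left (Nat.mul_le_mul h2M h2M) k
    _ = 2^(2*((3*L+15)*(k+1))*k) := by rw [← pow_add, ← pow_mul]; ring_nf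
    _ < 2^(n+1) := Nat.pow_lt_pow_right (by norm_num) hexp
theorem main_aux (K n : ℕ)
    (w : ℕ → ℂ) (hw : ∀ i, ‖w i‖ ≤ 1)
    (hcount : ((2*(4^(K+1)*(n+1)*(n+(K+1)+1)^(K+1))+1)
        * (2*(4^(K+1)*(n+1)*(n+(K+1)+1)^(K+1))+1))^(K+1) < 2^(n+1)) :
    ∃ P : Polynomial ℂ, NN w (K+1) ∣ P ∧ P.Monic ∧ P.natDegree ≤ (K+1) + n ∧
      ∀ j, ‖P.coeff j‖ ≤ 11 := by
  classical
  set M : ℕ := 4^(K+1)*(n+1)*(n+(K+1)+1)^(K+1) with hMdef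
  -- the 0/1-coefficient polynomials are indexed by `a : Fin (n+1) → Fin 2`
  set g : (Fin (n+1) → Fin 2) → ℕ → ℂ :=
    fun a j => ∑ i : Fin (n+1), ((a i : ℕ) : ℂ) * cfAux w ((K+1) + (i:ℕ)) j with hgdef
  -- bound on the remainder data
  have hgb : ∀ (a : Fin (n+1) → Fin 2) (j : ℕ), j < K+1 →
      ‖g a j‖ ≤ ((n+1) * (n+(K+1)+1)^(K+1) : ℕ) := by
    intro a j hj
    calc ‖g a j‖
        ≤ ∑ i : Fin (n+1), ‖((a i : ℕ) : ℂ) * cfAux w ((K+1) + (i:ℕ)) j‖ := by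
          rw [hgdef]
          exact norm_sum_le _ _
      _ ≤ ∑ _i : Fin (n+1), (((n+(K+1)+1)^(K+1) : ℕ) : ℝ) := by
          refine Finset.sum_le_sum fun i _ => ?_
          rw [norm_mul]
          have h1 : ‖((a i : ℕ) : ℂ)‖ ≤ 1 := by
            have : (a i : ℕ) ≤ 1 := by omega
            rcases Nat.le_one_iff_eq_zero_or_eq_one.1 this with h | h <;> simp [h]
          have h2 : ‖cfAux w ((K+1) + (i:ℕ)) j‖
              ≤ (((n+(K+1)+1)^(K+1) : ℕ) : ℝ) := by
            refine (cfAux_abs_le w hw _ j).trans ?_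
            have hc : ((K+1) + (i:ℕ)).choose j ≤ (n+(K+1)+1)^(K+1) := by
              calc ((K+1) + (i:ℕ)).choose j ≤ ((K+1) + (i:ℕ))^j := Nat.choose_le_pow _ _
                _ ≤ (n+(K+1)+1)^j := Nat.pow_le_pow_left (by omega) _
                _ ≤ (n+(K+1)+1)^(K+1) := Nat.pow_le_pow_right (by omega) (by omega)
            exact_mod_cast Nat.cast_le.2 hc
          calc ‖((a i : ℕ) : ℂ)‖ * ‖cfAux w ((K+1) + (i:ℕ)) j‖
              ≤ 1 * (((n+(K+1)+1)^(K+1) : ℕ) : ℝ) :=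
                mul_le_mul h1 h2 (by positivity) (by positivity)
            _ = _ := one_mul _
      _ = ((n+1) * (n+(K+1)+1)^(K+1) : ℕ) := by
          rw [Finset.sum_const, Finset.card_univ, Fintype.card_fin]
          push_cast
          ring
  -- discretization map
  set Φ : (Fin (n+1) → Fin 2) → (Fin (K+1) → ℤ × ℤ) :=
    fun a j => (⌊(4:ℝ)^(K+1) * (g a (j:ℕ)).re⌋, ⌊(4:ℝ)^(K+1) * (g a (j:ℕ)).im⌋) with hΦdef
  set T : Finset (Fin (K+1) → ℤ × ℤ) :=
    Fintype.piFinset (fun _ => Finset.Icc (-(M:ℤ)) (M:ℤ) ×ˢ Finset.Icc (-(M:ℤ)) (M:ℤ)) with hTdef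
  have hmaps : ∀ a, Φ a ∈ T := by
    intro a
    rw [hTdef, Fintype.mem_piFinset]
    intro j
    rw [Finset.mem_product]
    have hb : ‖g a (j:ℕ)‖ ≤ ((n+1) * (n+(K+1)+1)^(K+1) : ℕ) := hgb a j j.isLt
    have habs : ∀ x : ℝ, |x| ≤ ‖g a (j:ℕ)‖ →
        ⌊(4:ℝ)^(K+1) * x⌋ ∈ Finset.Icc (-(M:ℤ)) (M:ℤ) := by
      intro x hx
      have hxb : |(4:ℝ)^(K+1) * x| ≤ (M:ℝ) := by
        rw [abs_mul, abs_pow]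
        have h4 : |(4:ℝ)| = 4 := by norm_num
        rw [h4]
        calc (4:ℝ)^(K+1) * |x| ≤ (4:ℝ)^(K+1) * ((n+1) * (n+(K+1)+1)^(K+1) : ℕ) := by
              exact mul_le_mul_of_nonneg_left (hx.trans hb) (by positivity)
          _ = (M:ℝ) := by rw [hMdef]; push_cast; ring
      rw [Finset.mem_Icc]
      rw [abs_le] at hxb
      constructor
      · exact Int.le_floor.2 (by exact_mod_cast hxb.1)
      · have := (Int.floor_le ((4:ℝ)^(K+1) * x)).trans hxb.2
        exact_mod_cast this
    exact ⟨habs _ (by exact Complex.abs_re_le_norm _), habs _ (by exact Complex.abs_im_le_norm _)⟩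
  -- cardinalities
  have hcardA : Fintype.card (Fin (n+1) → Fin 2) = 2^(n+1) := by
    simp [Fintype.card_fun]
  have hcardT : T.card = ((2*M+1) * (2*M+1))^(K+1) := by
    rw [hTdef, Fintype.card_piFinset]
    have h1 : ∀ _j : Fin (K+1),
        (Finset.Icc (-(M:ℤ)) (M:ℤ) ×ˢ Finset.Icc (-(M:ℤ)) (M:ℤ)).card = (2*M+1) * (2*M+1) := by
      intro j
      rw [Finset.card_product, Int.card_Icc]
      have : ((M:ℤ) + 1 - -(M:ℤ)).toNat = 2*M+1 := by omega
      rw [this]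
    rw [Finset.prod_congr rfl (fun j _ => h1 j), Finset.prod_const, Finset.card_univ,
      Fintype.card_fin]
  -- pigeonhole
  obtain ⟨a, -, b, -, hab, hΦeq⟩ :=
    Finset.exists_ne_map_eq_of_card_lt_of_maps_to
      (s := (Finset.univ : Finset (Fin (n+1) → Fin 2))) (t := T)
      (by rw [Finset.card_univ, hcardA, hcardT]; exact hcount) (fun a _ => hmaps a)
  -- the difference polynomial
  set dz : Fin (n+1) → ℂ := fun i => ((a i : ℕ) : ℂ) - ((b i : ℕ) : ℂ) with hdzdef
  have hdzcases : ∀ i, dz i = 0 ∨ dz i = 1 ∨ dz i = -1 := by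
    intro i
    have ha : (a i : ℕ) = 0 ∨ (a i : ℕ) = 1 := by omega
    have hb2 : (b i : ℕ) = 0 ∨ (b i : ℕ) = 1 := by omega
    rcases ha with h1 | h1 <;> rcases hb2 with h2 | h2 <;>
      simp [hdzdef, h1, h2]
  have hdzabs : ∀ i, ‖dz i‖ ≤ 1 := by
    intro i
    rcases hdzcases i with h | h | h <;> simp [h]
  obtain ⟨i1, hi1⟩ : ∃ i, dz i ≠ 0 := by
    obtain ⟨i, hi⟩ := Function.ne_iff.1 hab
    refine ⟨i, ?_⟩
    rw [hdzdef]
    have : (a i : ℕ) ≠ (b i : ℕ) := fun h => hi (Fin.val_injective h)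
    intro hcon
    rw [sub_eq_zero] at hcon
    exact this (by exact_mod_cast hcon)
  set P0 : Polynomial ℂ := ∑ i : Fin (n+1), monomial ((K+1) + (i:ℕ)) (dz i) with hP0def
  set G : ℕ → ℂ := fun j => g a j - g b j with hGdef
  set S : Polynomial ℂ := ∑ j ∈ range (K+1), C (G j) * NN w j with hSdef
  -- divisibility
  have hGsum : ∀ j, G j = ∑ i : Fin (n+1), dz i * cfAux w ((K+1)+(i:ℕ)) j := by
    intro j
    rw [hGdef, hgdef, hdzdef]
    simp only [← Finset.sum_sub_distrib, sub_mul]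
  have hdvd : NN w (K+1) ∣ P0 - S := by
    have hiden : P0 - S = ∑ i : Fin (n+1), C (dz i) *
        (X^((K+1)+(i:ℕ)) - ∑ j ∈ range (K+1), C (cfAux w ((K+1)+(i:ℕ)) j) * NN w j) := by
      have e1 : ∑ i : Fin (n+1), C (dz i) *
          (X^((K+1)+(i:ℕ)) - ∑ j ∈ range (K+1), C (cfAux w ((K+1)+(i:ℕ)) j) * NN w j)
          = (∑ i : Fin (n+1), C (dz i) * X^((K+1)+(i:ℕ)))
            - ∑ i : Fin (n+1), C (dz i) *
                ∑ j ∈ range (K+1), C (cfAux w ((K+1)+(i:ℕ)) j) * NN w j := by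
        rw [← Finset.sum_sub_distrib]
        exact Finset.sum_congr rfl fun i _ => by rw [mul_sub]
      have e2 : (∑ i : Fin (n+1), C (dz i) * X^((K+1)+(i:ℕ))) = P0 := by
        rw [hP0def]
        exact Finset.sum_congr rfl fun i _ => C_mul_X_pow_eq_monomial
      have e3 : (∑ i : Fin (n+1), C (dz i) *
          ∑ j ∈ range (K+1), C (cfAux w ((K+1)+(i:ℕ)) j) * NN w j) = S := by
        rw [hSdef]
        calc ∑ i : Fin (n+1), C (dz i) *
              ∑ j ∈ range (K+1), C (cfAux w ((K+1)+(i:ℕ)) j) * NN w j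
            = ∑ i : Fin (n+1), ∑ j ∈ range (K+1),
                C (dz i * cfAux w ((K+1)+(i:ℕ)) j) * NN w j := by
              refine Finset.sum_congr rfl fun i _ => ?_
              rw [Finset.mul_sum]
              exact Finset.sum_congr rfl fun j _ => by rw [map_mul]; ring
          _ = ∑ j ∈ range (K+1), ∑ i : Fin (n+1),
                C (dz i * cfAux w ((K+1)+(i:ℕ)) j) * NN w j := Finset.sum_comm
          _ = ∑ j ∈ range (K+1), C (G j) * NN w j := by
              refine Finset.sum_congr rfl fun j _ => ?_
              rw [hGsum j, ← Finset.sum_mul, ← map_sum]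
      rw [e1, e2, e3]
    rw [hiden]
    exact Finset.dvd_sum fun i _ => Dvd.dvd.mul_left (key_dvd w K _) _
  -- coefficients of P0
  have hP0coeff : ∀ t, P0.coeff t = 0 ∨ ∃ i : Fin (n+1), P0.coeff t = dz i := by
    intro t
    have hc : P0.coeff t = ∑ i : Fin (n+1), if (K+1) + (i:ℕ) = t then dz i else 0 := by
      rw [hP0def, finset_sum_coeff]
      exact Finset.sum_congr rfl fun i _ => coeff_monomial
    by_cases hex : ∃ i : Fin (n+1), (K+1) + (i:ℕ) = t
    · obtain ⟨i0, hi0⟩ := hex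
      right
      refine ⟨i0, ?_⟩
      rw [hc, Finset.sum_eq_single i0]
      · rw [if_pos hi0]
      · intro i _ hne
        rw [if_neg]
        intro hcon
        exact hne (by
          have : (i:ℕ) = (i0:ℕ) := by omega
          exact Fin.val_injective this)
      · intro hcon
        exact absurd (Finset.mem_univ i0) hcon
    · left
      rw [hc]
      exact Finset.sum_eq_zero fun i _ => if_neg fun hcon => hex ⟨i, hcon⟩
  have hP0c : ∀ i : Fin (n+1), P0.coeff ((K+1)+(i:ℕ)) = dz i := by
    intro i0
    have hc : P0.coeff ((K+1)+(i0:ℕ))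
        = ∑ i : Fin (n+1), if (K+1) + (i:ℕ) = (K+1)+(i0:ℕ) then dz i else 0 := by
      rw [hP0def, finset_sum_coeff]
      exact Finset.sum_congr rfl fun i _ => coeff_monomial
    rw [hc, Finset.sum_eq_single i0]
    · rw [if_pos rfl]
    · intro i _ hne
      exact if_neg fun hcon => hne (Fin.val_injective (by omega))
    · intro hcon
      exact absurd (Finset.mem_univ i0) hcon
  have hP0abs : ∀ t, ‖P0.coeff t‖ ≤ 1 := by
    intro t
    rcases hP0coeff t with h | ⟨i, h⟩
    · simp [h]
    · rw [h]; exact hdzabs i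
  -- bound on G
  have hGb : ∀ j : ℕ, j < K+1 → ‖G j‖ ≤ 2 * ((4:ℝ)^(K+1))⁻¹ := by
    intro j hj
    have h4pos : (0:ℝ) < (4:ℝ)^(K+1) := by positivity
    have hΦj := congrFun hΦeq ⟨j, hj⟩
    rw [hΦdef] at hΦj
    have hre := congrArg Prod.fst hΦj
    have him := congrArg Prod.snd hΦj
    simp only at hre him
    have hre' : |(4:ℝ)^(K+1) * (g a j).re - (4:ℝ)^(K+1) * (g b j).re| < 1 :=
      Int.abs_sub_lt_one_of_floor_eq_floor hre
    have him' : |(4:ℝ)^(K+1) * (g a j).im - (4:ℝ)^(K+1) * (g b j).im| < 1 :=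
      Int.abs_sub_lt_one_of_floor_eq_floor him
    have hre2 : |(G j).re| ≤ ((4:ℝ)^(K+1))⁻¹ := by
      rw [hGdef]
      simp only [Complex.sub_re]
      have : (4:ℝ)^(K+1) * (g a j).re - (4:ℝ)^(K+1) * (g b j).re
          = (4:ℝ)^(K+1) * ((g a j).re - (g b j).re) := by ring
      rw [this, abs_mul, abs_of_pos h4pos] at hre'
      have h5 := mul_lt_mul_of_pos_left hre' (inv_pos.2 h4pos)
      rw [← mul_assoc, inv_mul_cancel₀ (ne_of_gt h4pos), one_mul, mul_one] at h5
      exact h5.le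
    have him2 : |(G j).im| ≤ ((4:ℝ)^(K+1))⁻¹ := by
      rw [hGdef]
      simp only [Complex.sub_im]
      have : (4:ℝ)^(K+1) * (g a j).im - (4:ℝ)^(K+1) * (g b j).im
          = (4:ℝ)^(K+1) * ((g a j).im - (g b j).im) := by ring
      rw [this, abs_mul, abs_of_pos h4pos] at him'
      have h5 := mul_lt_mul_of_pos_left him' (inv_pos.2 h4pos)
      rw [← mul_assoc, inv_mul_cancel₀ (ne_of_gt h4pos), one_mul, mul_one] at h5
      exact h5.le
    calc ‖G j‖ ≤ |(G j).re| + |(G j).im| := Complex.norm_le_abs_re_add_abs_im _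
      _ ≤ ((4:ℝ)^(K+1))⁻¹ + ((4:ℝ)^(K+1))⁻¹ := add_le_add hre2 him2
      _ = 2 * ((4:ℝ)^(K+1))⁻¹ := by ring
  -- bound on S coefficients
  have hSabs : ∀ t, ‖S.coeff t‖ ≤ 1 := by
    intro t
    have hc : S.coeff t = ∑ j ∈ range (K+1), G j * (NN w j).coeff t := by
      rw [hSdef, finset_sum_coeff]
      exact Finset.sum_congr rfl fun j _ => coeff_C_mul _
    rw [hc]
    have h4pos : (0:ℝ) < (4:ℝ)^(K+1) := by positivity
    calc ‖∑ j ∈ range (K+1), G j * (NN w j).coeff t‖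
        ≤ ∑ j ∈ range (K+1), ‖G j * (NN w j).coeff t‖ :=
          norm_sum_le _ _
      _ ≤ ∑ j ∈ range (K+1), (2 * ((4:ℝ)^(K+1))⁻¹) * 2^j := by
          refine Finset.sum_le_sum fun j hj => ?_
          rw [norm_mul]
          exact mul_le_mul (hGb j (Finset.mem_range.1 hj)) (NN_coeff_abs_le w hw j t)
            (by positivity) (by positivity)
      _ = (2 * ((4:ℝ)^(K+1))⁻¹) * ∑ j ∈ range (K+1), 2^j := by rw [Finset.mul_sum]
      _ ≤ (2 * ((4:ℝ)^(K+1))⁻¹) * 2^(K+1) := by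
          refine mul_le_mul_of_nonneg_left ?_ (by positivity)
          rw [geom_sum_eq (by norm_num : (2:ℝ) ≠ 1)]
          rw [show (2:ℝ) - 1 = 1 by norm_num, div_one]
          linarith [pow_pos (by norm_num : (0:ℝ) < 2) (K+1)]
      _ ≤ 1 := by
          rw [show (4:ℝ) = 2*2 by norm_num, mul_pow]
          have h2 : (0:ℝ) < (2:ℝ)^(K+1) := by positivity
          have h2' : (2:ℝ) ≤ (2:ℝ)^(K+1) := by
            calc (2:ℝ) = 2^1 := (pow_one 2).symm
              _ ≤ 2^(K+1) := by
                exact pow_le_pow_right₀ (by norm_num) (by omega)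
          rw [mul_inv]
          rw [show (2:ℝ) * ((2^(K+1))⁻¹ * (2^(K+1))⁻¹) * 2^(K+1)
              = 2 * (2^(K+1))⁻¹ * ((2^(K+1))⁻¹ * 2^(K+1)) by ring]
          rw [inv_mul_cancel₀ (ne_of_gt h2), mul_one]
          rw [mul_inv_le_iff₀ h2, one_mul]
          exact h2'
  -- degrees and leading coefficient
  have hSdeg : S.natDegree ≤ K := by
    rw [hSdef]
    refine natDegree_sum_le_of_forall_le _ _ fun j hj => ?_
    refine (natDegree_mul_le).trans ?_
    rw [natDegree_C, NN_natDegree]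
    have := Finset.mem_range.1 hj
    omega
  have hP0ne : P0 ≠ 0 := fun h => hi1 (by rw [← hP0c i1, h, coeff_zero])
  have hP0degge : K + 1 ≤ P0.natDegree := by
    have := le_natDegree_of_ne_zero (p := P0) (n := (K+1)+(i1:ℕ)) (by rw [hP0c i1]; exact hi1)
    omega
  have hP0degle : P0.natDegree ≤ (K+1) + n := by
    rw [hP0def]
    refine natDegree_sum_le_of_forall_le _ _ fun i _ => ?_
    refine (natDegree_monomial_le _).trans ?_
    have := i.isLt
    omega
  have hdeglt : S.natDegree < P0.natDegree := by omega
  set P1 : Polynomial ℂ := P0 - S with hP1def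
  have hP1deg : P1.natDegree = P0.natDegree := natDegree_sub_eq_left_of_natDegree_lt hdeglt
  have hScoeff0 : S.coeff P0.natDegree = 0 :=
    coeff_eq_zero_of_natDegree_lt (by omega)
  have hP1lead : P1.leadingCoeff = P0.leadingCoeff := by
    rw [leadingCoeff, leadingCoeff, hP1deg, hP1def, coeff_sub, hScoeff0, sub_zero]
  have hP0leadne : P0.leadingCoeff ≠ 0 := leadingCoeff_ne_zero.2 hP0ne
  have hP1ne : P1 ≠ 0 := leadingCoeff_ne_zero.1 (by rw [hP1lead]; exact hP0leadne)
  have hleadabs : ‖P1.leadingCoeff‖ = 1 := by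
    rw [hP1lead, leadingCoeff]
    rcases hP0coeff P0.natDegree with h | ⟨i, h⟩
    · exact absurd (leadingCoeff_eq_zero.1 h) hP0ne
    · rw [h]
      rcases hdzcases i with h2 | h2 | h2
      · rw [h2] at h
        exact absurd (leadingCoeff_eq_zero.1 h) hP0ne
      · simp [h2]
      · simp [h2]
  refine ⟨P1 * C (P1.leadingCoeff)⁻¹, ?_, monic_mul_leadingCoeff_inv hP1ne, ?_, ?_⟩
  · exact Dvd.dvd.mul_right hdvd _
  · refine natDegree_mul_le.trans ?_
    rw [natDegree_C, hP1deg]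
    omega
  · intro t
    rw [coeff_mul_C, norm_mul, norm_inv, hleadabs, inv_one, mul_one]
    have : ‖P1.coeff t‖ ≤ 2 := by
      rw [hP1def, coeff_sub]
      calc ‖P0.coeff t - S.coeff t‖
          ≤ ‖P0.coeff t‖ + ‖S.coeff t‖ :=
            norm_sub_le _ _
        _ ≤ 1 + 1 := add_le_add (hP0abs t) (hSabs t)
        _ = 2 := by norm_num
    linarith

lemma final_deg (K L n d : ℕ) (hL : L = Nat.log 2 (K+1))
    (hn : n = 300 * ((K+1)^2 * (L + 4))) (hd : d ≤ K + 1 + n) :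
    (d:ℝ) ≤ 1201 * ((K+1:ℕ):ℝ)^2 * (1 + Real.log ((K+1:ℕ):ℝ)) := by
  have hpow : (2:ℕ)^L ≤ K+1 := hL ▸ Nat.pow_log_le_self 2 (Nat.succ_ne_zero K)
  have hL2 : (L:ℝ) * Real.log 2 ≤ Real.log ((K+1 : ℕ) : ℝ) := by
    have h2 : ((2:ℝ))^L ≤ ((K+1:ℕ):ℝ) := by exact_mod_cast hpow
    calc (L:ℝ) * Real.log 2 = Real.log ((2:ℝ)^L) := by rw [Real.log_pow]
      _ ≤ Real.log ((K+1:ℕ):ℝ) := Real.log_le_log (by positivity) h2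
  have hlog2 : (0.6931:ℝ) ≤ Real.log 2 := by
    have := Real.log_two_gt_d9
    linarith
  have hx1 : (1:ℝ) ≤ ((K+1:ℕ):ℝ) := by exact_mod_cast Nat.succ_le_of_lt (Nat.succ_pos K)
  have hlogk : 0 ≤ Real.log ((K+1:ℕ):ℝ) := Real.log_nonneg hx1
  have hLle : (L:ℝ) ≤ (3/2) * Real.log ((K+1:ℕ):ℝ) := by
    have hL0 : (0:ℝ) ≤ (L:ℝ) := Nat.cast_nonneg L
    nlinarith
  have hcast : ((K+1:ℕ):ℝ) = (K:ℝ)+1 := by push_cast; ring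
  have hd' : (d:ℝ) ≤ ((K:ℝ)+1) + 300 * (((K:ℝ)+1)^2 * ((L:ℝ)+4)) := by
    have : (d:ℝ) ≤ ((K + 1 + n : ℕ):ℝ) := Nat.cast_le.2 hd
    refine this.trans ?_
    rw [hn]
    push_cast
    ring_nf
    exact le_refl _
  rw [hcast] at hLle hlogk hx1 ⊢
  have hxx : (K:ℝ)+1 ≤ ((K:ℝ)+1)^2 := by nlinarith
  nlinarith [mul_le_mul_of_nonneg_left hLle (by positivity : (0:ℝ) ≤ 300*((K:ℝ)+1)^2),
    mul_nonneg (by positivity : (0:ℝ) ≤ ((K:ℝ)+1)^2) hlogk]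

/-- Every monic polynomial with roots in the closed unit disk has a monic
multiple of degree `O(k² ln k)` whose coefficients are all bounded by `11` in absolute value. -/
theorem exists_small_coeff_multiple :
    ∃ K : ℝ, 1 ≤ K ∧
      ∀ (k : ℕ), 1 ≤ k → ∀ z : Fin k → ℂ, (∀ i, ‖z i‖ ≤ 1) →
        ∃ P : Polynomial ℂ,
          (∏ i, (X - C (z i))) ∣ P ∧
          P.Monic ∧
          (P.natDegree : ℝ) ≤ K * (k : ℝ) ^ 2 * (1 + Real.log k) ∧
          ∀ j, ‖P.coeff j‖ ≤ 11 := by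
  refine ⟨1201, by norm_num, ?_⟩
  intro k hk z hz
  obtain ⟨K, rfl⟩ : ∃ K, k = K + 1 := ⟨k - 1, by omega⟩
  obtain ⟨L, hLdef⟩ : ∃ L, L = Nat.log 2 (K+1) := ⟨_, rfl⟩
  obtain ⟨n, hndef⟩ : ∃ n, n = 300 * ((K+1)^2 * (L + 4)) := ⟨_, rfl⟩
  set w : ℕ → ℂ := fun i => if h : i < K+1 then z ⟨i, h⟩ else 0 with hwdef
  have hw : ∀ i, ‖w i‖ ≤ 1 := by
    intro i
    rw [hwdef]
    dsimp only
    split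
    · exact hz _
    · simp
  have hcount := count_lt (K+1) n (4^(K+1)*(n+1)*(n+(K+1)+1)^(K+1)) L
    (by omega) hLdef hndef rfl
  obtain ⟨P, hdvd, hmono, hdeg, hcoeff⟩ := main_aux K n w hw hcount
  have hQ : (∏ i : Fin (K+1), (X - C (z i))) = NN w (K+1) := by
    rw [NN, ← Fin.prod_univ_eq_prod_range (fun i => X - C (w i)) (K+1)]
    refine Finset.prod_congr rfl fun i _ => ?_
    rw [hwdef]
    dsimp only
    rw [dif_pos i.isLt]
  refine ⟨P, by rw [hQ]; exact hdvd, hmono, ?_, hcoeff⟩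
  exact final_deg K L n P.natDegree hLdef hndef hdeg
end
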